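/- arXiv:2002.09116 — 5 statements merged into one kernel-verified Lean document; each statement's English description precedes it below -/
import Mathlib

section
/- Let f : X → ℝ be a measurable function and define the kernel k_f^{(S)}(x,y) = (1/4)·𝟙(f(x)>0)·𝟙(f(y)>0). For Borel probability measures P, Q on X, define acc(P,Q;f) = (1/2)·Pr_{X∼P}(f(X)>0) + (1/2)·Pr_{Y∼Q}(f(Y)≤0). Then MMD(P,Q;k_f^{(S)}) = |acc(P,Q;f) − 1/2|. Moreover, for sample sets S_P = {x_1,…,x_n} and S_Q = {y_1,…,y_n}, defining the empirical accuracy âcc(S_P,S_Q;f) = (1/(2n))·Σ_{i=1}^n 𝟙(f(x_i)>0) + (1/(2n))·Σ_{i=1}^n 𝟙(f(y_i)≤0), the biased estimator satisfies MMD_b(S_P,S_Q;k_f^{(S)}) = |âcc(S_P,S_Q;f) − 1/2|. -/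
/-!
The sign kernel has rank one: `k x y = φ x * φ y` with `φ = ½ · 𝟙{f > 0}`. For any rank-one
kernel the squared MMD collapses to `(E_P φ - E_Q φ)²`, and likewise the biased estimator to the
square of the difference of the empirical means. Since `Q{f ≤ 0} = 1 - Q{f > 0}`, the difference
of means is exactly `acc - ½`, at the population level and on samples.
-/

open MeasureTheory Finset

noncomputable section

def MMD2 {𝓧 : Type*} [MeasurableSpace 𝓧] (k : 𝓧 → 𝓧 → ℝ) (P Q : Measure 𝓧) : ℝ :=
  (∫ x, ∫ x', k x x' ∂P ∂P) + (∫ y, ∫ y', k y y' ∂Q ∂Q) - 2 * ∫ x, ∫ y, k x y ∂Q ∂P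

def MMDbSq {𝓧 : Type*} {n : ℕ} (k : 𝓧 → 𝓧 → ℝ) (x y : Fin n → 𝓧) : ℝ :=
  (1 / (n : ℝ) ^ 2) * ∑ i : Fin n, ∑ j : Fin n,
    (k (x i) (x j) + k (y i) (y j) - k (x i) (y j) - k (x j) (y i))

section RankOne

variable {𝓧 : Type*} {k : 𝓧 → 𝓧 → ℝ} {g : 𝓧 → ℝ}

theorem MMD2_eq_sq_of_eq_mul [MeasurableSpace 𝓧] (hk : ∀ x y, k x y = g x * g y)
    (P Q : Measure 𝓧) : MMD2 k P Q = ((∫ x, g x ∂P) - ∫ y, g y ∂Q) ^ 2 := by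
  have hdouble : ∀ μ ν : Measure 𝓧, ∫ x, ∫ y, k x y ∂ν ∂μ = (∫ x, g x ∂μ) * ∫ y, g y ∂ν := by
    intro μ ν
    simp only [hk, integral_const_mul, integral_mul_const]
  rw [MMD2, hdouble, hdouble, hdouble]
  ring

theorem MMDbSq_eq_sq_of_eq_mul (hk : ∀ x y, k x y = g x * g y) {n : ℕ} (x y : Fin n → 𝓧) :
    MMDbSq k x y = ((∑ i, (g (x i) - g (y i))) / n) ^ 2 := by
  have hsum : ∑ i, ∑ j, (k (x i) (x j) + k (y i) (y j) - k (x i) (y j) - k (x j) (y i)) =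
      (∑ i, (g (x i) - g (y i))) ^ 2 := by
    simp only [sq, sum_mul_sum, hk]
    refine sum_congr rfl fun i _ => sum_congr rfl fun j _ => ?_
    ring
  rw [MMDbSq, hsum]
  ring

end RankOne

theorem integral_ite_pos_eq_measureReal {𝓧 : Type*} [MeasurableSpace 𝓧] {f : 𝓧 → ℝ}
    (hf : Measurable f) (μ : Measure 𝓧) :
    ∫ a, (if 0 < f a then (1 : ℝ) else 0) ∂μ = μ.real {a | 0 < f a} := by
  rw [← integral_indicator_one (measurableSet_lt measurable_const hf)]
  rfl

theorem ite_nonpos_eq_one_sub (r : ℝ) :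
    (if r ≤ 0 then (1 : ℝ) else 0) = 1 - if 0 < r then 1 else 0 := by
  by_cases h : 0 < r <;> simp [h, not_le.mpr, le_of_not_gt]

/-- The C2ST-S accuracy kernel `k_f^{(S)}` corresponds to MMD equal to `|acc - 1/2|`,
both at the population level and for the biased estimator on samples. -/
theorem mmd_sign_kernel_eq_acc {𝓧 : Type*} [MeasurableSpace 𝓧]
    (f : 𝓧 → ℝ) (hf : Measurable f)
    (k : 𝓧 → 𝓧 → ℝ)
    (hk : ∀ x y, k x y =
      (1 / 4) * (if 0 < f x then (1 : ℝ) else 0) * (if 0 < f y then (1 : ℝ) else 0))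
    (P Q : Measure 𝓧) [IsProbabilityMeasure P] [IsProbabilityMeasure Q]
    (n : ℕ) (hn : 1 ≤ n) (x y : Fin n → 𝓧) :
    Real.sqrt (MMD2 k P Q) =
      |((1 / 2) * (P {a | 0 < f a}).toReal + (1 / 2) * (Q {a | f a ≤ 0}).toReal) - 1 / 2| ∧
    Real.sqrt (MMDbSq k x y) =
      |((1 / (2 * (n : ℝ))) * ∑ i : Fin n, (if 0 < f (x i) then (1 : ℝ) else 0)
        + (1 / (2 * (n : ℝ))) * ∑ i : Fin n, (if f (y i) ≤ 0 then (1 : ℝ) else 0)) - 1 / 2| := by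
  set g : 𝓧 → ℝ := fun a => 1 / 2 * if 0 < f a then 1 else 0
  have hkg : ∀ x y, k x y = g x * g y := fun x y => by rw [hk]; ring
  have hs : MeasurableSet {a | 0 < f a} := measurableSet_lt measurable_const hf
  have hQ : (Q {a | f a ≤ 0}).toReal = 1 - Q.real {a | 0 < f a} := by
    rw [← probReal_compl_eq_one_sub hs, measureReal_def]
    simp only [Set.compl_ofPred, not_lt]
  have hn0 : (n : ℝ) ≠ 0 := Nat.cast_ne_zero.mpr (by omega)
  constructor
  · rw [MMD2_eq_sq_of_eq_mul hkg, Real.sqrt_sq_eq_abs, hQ, ← measureReal_def]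
    simp only [g, integral_const_mul, integral_ite_pos_eq_measureReal hf]
    ring_nf
  · rw [MMDbSq_eq_sq_of_eq_mul hkg, Real.sqrt_sq_eq_abs]
    simp only [g, ite_nonpos_eq_one_sub, sum_sub_distrib, ← mul_sub, ← mul_sum, sum_const,
      card_univ, Fintype.card_fin, nsmul_eq_mul]
    congr 1
    field_simp
    ring
end
end

section
/- Let k be a fixed symmetric kernel with |k(x,y)| ≤ ν for all x, y. Then with probability at least 1 − δ over the draw of the samples, | σ̂_k² − E[σ̂_k²] | ≤ 448·ν²·sqrt( (2/n)·log(2/δ) ). -/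
open MeasureTheory Finset

noncomputable section

/-- `H_{ij} = k(X_i,X_j) + k(Y_i,Y_j) - k(X_i,Y_j) - k(X_j,Y_i)` for the sample
`sp = (X, Y)`. -/
def Hmat {𝓧 : Type*} {n : ℕ} (k : 𝓧 → 𝓧 → ℝ) (sp : (Fin n → 𝓧) × (Fin n → 𝓧))
    (i j : Fin n) : ℝ :=
  k (sp.1 i) (sp.1 j) + k (sp.2 i) (sp.2 j) - k (sp.1 i) (sp.2 j) - k (sp.1 j) (sp.2 i)

/-- The U-statistic MMD estimator `η̂ = (1/(n(n-1))) ∑_{i≠j} H_{ij}`. -/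
def etaHat {𝓧 : Type*} {n : ℕ} (k : 𝓧 → 𝓧 → ℝ) (sp : (Fin n → 𝓧) × (Fin n → 𝓧)) : ℝ :=
  (1 / ((n : ℝ) * ((n : ℝ) - 1))) * ∑ i : Fin n, ∑ j ∈ univ.erase i, Hmat k sp i j

/-- The variance estimator
`σ̂² = 4 ( (1/n³) ∑_i (∑_j H_{ij})² - (1/n⁴) (∑_{ij} H_{ij})² )`. -/
def sigmaHatSq {𝓧 : Type*} {n : ℕ} (k : 𝓧 → 𝓧 → ℝ) (sp : (Fin n → 𝓧) × (Fin n → 𝓧)) : ℝ :=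
  4 * ((1 / (n : ℝ) ^ 3) * ∑ i : Fin n, (∑ j : Fin n, Hmat k sp i j) ^ 2
     - (1 / (n : ℝ) ^ 4) * (∑ i : Fin n, ∑ j : Fin n, Hmat k sp i j) ^ 2)

/-- `h((x,y),(x',y')) = k(x,x') + k(y,y') - k(x,y') - k(x',y)`, so that
`H_{ij} = h((X_i,Y_i),(X_j,Y_j))`. -/
def hPair {𝓧 : Type*} (k : 𝓧 → 𝓧 → ℝ) (u v : 𝓧 × 𝓧) : ℝ :=
  k u.1 v.1 + k u.2 v.2 - k u.1 v.2 - k v.1 u.2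

/-- Population value `η = E[H_{12}]` (the squared MMD). -/
def etaPop {𝓧 : Type*} [MeasurableSpace 𝓧] (k : 𝓧 → 𝓧 → ℝ) (P Q : Measure 𝓧) : ℝ :=
  ∫ u, ∫ v, hPair k u v ∂(P.prod Q) ∂(P.prod Q)

/-- Population second moment `E[H_{12} H_{13}]`. -/
def hCross {𝓧 : Type*} [MeasurableSpace 𝓧] (k : 𝓧 → 𝓧 → ℝ) (P Q : Measure 𝓧) : ℝ :=
  ∫ u, ∫ v, ∫ w, hPair k u v * hPair k u w ∂(P.prod Q) ∂(P.prod Q) ∂(P.prod Q)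

/-- The asymptotic variance `σ² = 4 (E[H_{12} H_{13}] - E[H_{12}]²)`. -/
def sigmaSqPop {𝓧 : Type*} [MeasurableSpace 𝓧] (k : 𝓧 → 𝓧 → ℝ) (P Q : Measure 𝓧) : ℝ :=
  4 * (hCross k P Q - (etaPop k P Q) ^ 2)

/-- The joint law of `n` i.i.d. samples from `P` and `n` i.i.d. samples from `Q`,
all mutually independent. -/
def sampleMeasure {𝓧 : Type*} [MeasurableSpace 𝓧] (P Q : Measure 𝓧) (n : ℕ) :
    Measure ((Fin n → 𝓧) × (Fin n → 𝓧)) :=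
  (Measure.pi fun _ => P).prod (Measure.pi fun _ => Q)

/-!
`σ̂²` is four times the empirical variance of the row means `r_i = (1/n) ∑_j H_{ij}`, each of
which lies in `[-4ν, 4ν]`. Replacing a single `X_m` (or `Y_m`) changes `H` only in row and
column `m`, with `|ΔH_{ij}| ≤ 4ν (𝟙[i = m] + 𝟙[j = m])`, so `∑_i |Δr_i| ≤ 8ν` and `σ̂²` moves by
at most `c = 512 ν² / n`. McDiarmid's inequality, proved by peeling off one coordinate at a time
and applying Hoeffding's lemma to it, makes `σ̂² - E σ̂²` sub-Gaussian with variance proxy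
`2n (c/2)²`, and the Chernoff bound on both tails gives the estimate.
-/

open ProbabilityTheory Real
open scoped NNReal

namespace ProbabilityTheory

section Product

variable {Ω₁ Ω₂ : Type*} [MeasurableSpace Ω₁] [MeasurableSpace Ω₂]
  {μ₁ : Measure Ω₁} {μ₂ : Measure Ω₂} [SFinite μ₁] [SFinite μ₂]

lemma HasSubgaussianMGF.add_prod {X : Ω₁ → ℝ} {Y : Ω₁ × Ω₂ → ℝ} {c₁ c₂ : ℝ≥0}
    (hX : HasSubgaussianMGF X c₁ μ₁) (hY : Measurable Y)
    (hYsec : ∀ x, HasSubgaussianMGF (fun y ↦ Y (x, y)) c₂ μ₂) :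
    HasSubgaussianMGF (fun z ↦ X z.1 + Y z) (c₁ + c₂) (μ₁.prod μ₂) := by
  have hsec (t : ℝ) (x : Ω₁) :
      ∫ y, exp (t * (X x + Y (x, y))) ∂μ₂ = exp (t * X x) * mgf (fun y ↦ Y (x, y)) μ₂ t := by
    simp_rw [mul_add, exp_add, mgf]
    exact integral_const_mul _ _
  have hbound (t : ℝ) (x : Ω₁) :
      exp (t * X x) * mgf (fun y ↦ Y (x, y)) μ₂ t ≤ exp (t * X x) * exp (c₂ * t ^ 2 / 2) := by
    gcongr
    exact (hYsec x).mgf_le t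
  have hint (t : ℝ) : Integrable (fun z ↦ exp (t * (X z.1 + Y z))) (μ₁.prod μ₂) := by
    have hmeas : AEStronglyMeasurable (fun z ↦ exp (t * (X z.1 + Y z))) (μ₁.prod μ₂) :=
      (measurable_exp.comp_aemeasurable
        ((hX.aemeasurable.comp_fst.add hY.aemeasurable).const_mul t)).aestronglyMeasurable
    refine (integrable_prod_iff hmeas).2 ⟨ae_of_all _ fun x ↦ ?_, ?_⟩
    · simp_rw [mul_add, exp_add]
      exact ((hYsec x).integrable_exp_mul t).const_mul _
    · refine ((hX.integrable_exp_mul t).mul_const (exp (c₂ * t ^ 2 / 2))).mono'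
        hmeas.norm.integral_prod_right' (ae_of_all _ fun x ↦ ?_)
      rw [norm_of_nonneg (integral_nonneg fun _ ↦ norm_nonneg _)]
      simp only [Real.norm_eq_abs, abs_exp, hsec]
      exact hbound t x
  refine ⟨hint, fun t ↦ ?_⟩
  calc mgf (fun z ↦ X z.1 + Y z) (μ₁.prod μ₂) t
      = ∫ x, exp (t * X x) * mgf (fun y ↦ Y (x, y)) μ₂ t ∂μ₁ := by
        rw [mgf, integral_prod _ (hint t)]
        simp_rw [hsec]
    _ ≤ ∫ x, exp (t * X x) * exp (c₂ * t ^ 2 / 2) ∂μ₁ :=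
        integral_mono_of_nonneg (ae_of_all _ fun x ↦ mul_nonneg (exp_pos _).le mgf_nonneg)
          ((hX.integrable_exp_mul t).mul_const _) (ae_of_all _ (hbound t))
    _ = mgf X μ₁ t * exp (c₂ * t ^ 2 / 2) := integral_mul_const _ _
    _ ≤ exp (↑(c₁ + c₂) * t ^ 2 / 2) := by
        rw [NNReal.coe_add, add_mul, add_div, exp_add]
        gcongr
        exact hX.mgf_le t

lemma HasSubgaussianMGF.sub_integral_prod {F : Ω₁ × Ω₂ → ℝ} (hF : Measurable F)
    (hFi : Integrable F (μ₁.prod μ₂)) {c₁ c₂ : ℝ≥0}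
    (h₁ : HasSubgaussianMGF (fun x ↦ ∫ y, F (x, y) ∂μ₂ - ∫ x', ∫ y, F (x', y) ∂μ₂ ∂μ₁) c₁ μ₁)
    (h₂ : ∀ x, HasSubgaussianMGF (fun y ↦ F (x, y) - ∫ y', F (x, y') ∂μ₂) c₂ μ₂) :
    HasSubgaussianMGF (fun z ↦ F z - ∫ z', F z' ∂(μ₁.prod μ₂)) (c₁ + c₂) (μ₁.prod μ₂) := by
  have hY : Measurable fun z : Ω₁ × Ω₂ ↦ F z - ∫ y, F (z.1, y) ∂μ₂ :=
    hF.sub (hF.stronglyMeasurable.integral_prod_right'.measurable.comp measurable_fst)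
  convert h₁.add_prod hY h₂ using 2 with z
  rw [integral_prod _ hFi]
  ring

end Product

lemma hasSubgaussianMGF_of_forall_sub_le {Ω : Type*} [MeasurableSpace Ω] {μ : Measure Ω}
    [IsProbabilityMeasure μ] {g : Ω → ℝ} (hg : AEMeasurable g μ) {c : ℝ≥0}
    (hc : ∀ x y, g x - g y ≤ c) :
    HasSubgaussianMGF (fun ω ↦ g ω - μ[g]) ((c / 2) ^ 2) μ := by
  have : Nonempty Ω := nonempty_of_isProbabilityMeasure μ
  have hbdd : BddBelow (Set.range g) :=
    ⟨g (Classical.arbitrary Ω) - c, by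
      rintro _ ⟨x, rfl⟩
      linarith [hc (Classical.arbitrary Ω) x]⟩
  have hIcc : ∀ x, g x ∈ Set.Icc (⨅ y, g y) ((⨅ y, g y) + c) := fun x ↦
    ⟨ciInf_le hbdd x, by linarith [le_ciInf fun y ↦ (by linarith [hc x y] : g x - c ≤ g y)]⟩
  simpa using hasSubgaussianMGF_of_mem_Icc hg (ae_of_all _ hIcc)

lemma HasSubgaussianMGF.one_sub_le_measureReal_abs_le {Ω : Type*} [MeasurableSpace Ω]
    {μ : Measure Ω} [IsProbabilityMeasure μ] {X : Ω → ℝ} {c : ℝ≥0}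
    (h : HasSubgaussianMGF X c μ) {δ t : ℝ} (hδ : 0 < δ) (ht : 0 ≤ t)
    (hct : 2 * c * log (2 / δ) ≤ t ^ 2) :
    1 - δ ≤ μ.real {ω | |X ω| ≤ t} := by
  rcases eq_or_ne c 0 with rfl | hc
  · have hae : {ω | |X ω| ≤ t} =ᵐ[μ] Set.univ := ae_eq_univ.2 <| ae_iff.1 <|
      h.ae_eq_zero_of_hasSubgaussianMGF_zero.mono fun ω hω ↦ by simp [hω, ht]
    rw [measureReal_congr hae, probReal_univ]
    linarith
  have htail : exp (-t ^ 2 / (2 * c)) ≤ δ / 2 := by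
    calc exp (-t ^ 2 / (2 * c)) ≤ exp (-log (2 / δ)) := by
          gcongr
          rw [neg_div, neg_le_neg_iff, le_div_iff₀ (by positivity)]
          linarith
      _ = δ / 2 := by rw [exp_neg, exp_log (by positivity), inv_div]
  have hcover : Set.univ ⊆ {ω | |X ω| ≤ t} ∪ {ω | t ≤ X ω} ∪ {ω | t ≤ (-X) ω} := by
    intro ω _
    rcases le_or_gt (|X ω|) t with h | h
    · exact Or.inl (Or.inl h)
    · rcases lt_abs.1 h with h | h
      · exact Or.inl (Or.inr h.le)
      · exact Or.inr h.le
  calc 1 - δ ≤ μ.real {ω | |X ω| ≤ t} + μ.real {ω | t ≤ X ω} + μ.real {ω | t ≤ (-X) ω} - δ := by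
        rw [← probReal_univ (μ := μ)]
        gcongr
        refine (measureReal_mono hcover).trans ((measureReal_union_le _ _).trans ?_)
        gcongr
        exact measureReal_union_le _ _
    _ ≤ μ.real {ω | |X ω| ≤ t} := by
        linarith [h.measure_ge_le ht, h.neg.measure_ge_le ht]

section BoundedDifferences

variable {ι α : Type*} [DecidableEq ι]

def BoundedDifferences (f : (ι → α) → ℝ) (c : ι → ℝ≥0) : Prop :=
  ∀ x i z, |f (Function.update x i z) - f x| ≤ c i

lemma BoundedDifferences.integral {β : Type*} [MeasurableSpace β] {ν : Measure β}
    [IsProbabilityMeasure ν] {f : (ι → α) × β → ℝ} {c : ι → ℝ≥0}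
    (hfi : ∀ x, Integrable (fun y ↦ f (x, y)) ν)
    (hfc : ∀ y, BoundedDifferences (fun x ↦ f (x, y)) c) :
    BoundedDifferences (fun x ↦ ∫ y, f (x, y) ∂ν) c := by
  intro x i z
  rw [← integral_sub (hfi _) (hfi _), ← Real.norm_eq_abs]
  simpa using norm_integral_le_of_norm_le_const (μ := ν)
    (f := fun y ↦ f (Function.update x i z, y) - f (x, y)) (ae_of_all _ fun y ↦ hfc y x i z)

end BoundedDifferences

theorem hasSubgaussianMGF_pi_of_boundedDifferences {Ω : Type*} [MeasurableSpace Ω] {m : ℕ}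
    (μ : Fin m → Measure Ω) [∀ i, IsProbabilityMeasure (μ i)] {f : (Fin m → Ω) → ℝ}
    (hf : Measurable f) (hfb : ∃ C, ∀ x, |f x| ≤ C) {c : Fin m → ℝ≥0}
    (hfc : BoundedDifferences f c) :
    HasSubgaussianMGF (fun x ↦ f x - ∫ y, f y ∂Measure.pi μ) (∑ i, (c i / 2) ^ 2)
      (Measure.pi μ) := by
  induction m with
  | zero =>
    have hconst (x : Fin 0 → Ω) : f x = f isEmptyElim := congrArg f (Subsingleton.elim _ _)
    simp [hconst]
  | succ m ih =>
    obtain ⟨C, hC⟩ := hfb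
    let e := MeasurableEquiv.piFinSuccAbove (fun _ : Fin (m + 1) ↦ Ω) 0
    have he : MeasurePreserving e (Measure.pi μ) ((μ 0).prod (Measure.pi fun j ↦ μ j.succ)) :=
      measurePreserving_piFinSuccAbove μ 0
    have he_symm (p : Ω × (Fin m → Ω)) : e.symm p = Fin.cons p.1 p.2 :=
      Fin.insertNth_zero' p.1 p.2
    let F : Ω × (Fin m → Ω) → ℝ := fun p ↦ f (e.symm p)
    have hF : Measurable F := hf.comp e.symm.measurable
    have hFi : Integrable F ((μ 0).prod (Measure.pi fun j ↦ μ j.succ)) :=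
      Integrable.of_bound hF.aestronglyMeasurable C (ae_of_all _ fun p ↦ hC _)
    have hFsec (x : Ω) : Integrable (fun y ↦ F (x, y)) (Measure.pi fun j ↦ μ j.succ) :=
      Integrable.of_bound (hF.comp measurable_prodMk_left).aestronglyMeasurable C
        (ae_of_all _ fun p ↦ hC _)
    have h₁ := hasSubgaussianMGF_of_forall_sub_le
      (hF.stronglyMeasurable.integral_prod_right'.measurable.aemeasurable (μ := μ 0))
      (c := c 0) fun x x' ↦ by
        rw [← integral_sub (hFsec x) (hFsec x')]
        refine (Real.le_norm_self _).trans ?_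
        simpa using norm_integral_le_of_norm_le_const
          (μ := Measure.pi fun j ↦ μ j.succ) (f := fun y ↦ F (x, y) - F (x', y))
          (ae_of_all _ fun y ↦ by
            simpa [F, he_symm, Fin.update_cons_zero] using hfc (Fin.cons x' y) 0 x)
    have h₂ (x : Ω) := ih (fun j ↦ μ j.succ) (f := fun y ↦ F (x, y))
      (hF.comp measurable_prodMk_left) ⟨C, fun y ↦ hC _⟩ (c := fun j ↦ c j.succ) fun y j z ↦ by
        simpa only [F, he_symm, Fin.cons_update] using hfc (Fin.cons x y) j.succ z
    have key := h₁.sub_integral_prod hF hFi h₂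
    have hint : ∫ p, F p ∂(μ 0).prod (Measure.pi fun j ↦ μ j.succ) = ∫ x, f x ∂Measure.pi μ := by
      rw [← he.integral_comp' (g := F)]
      simp [F]
    rw [← he.map_eq] at key
    have := HasSubgaussianMGF.of_map he.measurable.aemeasurable key
    rw [he.map_eq] at this
    rw [Fin.sum_univ_succ]
    convert this using 2 with x
    simp [F, hint]

theorem hasSubgaussianMGF_prod_pi_of_boundedDifferences {Ω₁ Ω₂ : Type*} [MeasurableSpace Ω₁]
    [MeasurableSpace Ω₂] {m₁ m₂ : ℕ} (μ₁ : Fin m₁ → Measure Ω₁) (μ₂ : Fin m₂ → Measure Ω₂)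
    [∀ i, IsProbabilityMeasure (μ₁ i)] [∀ j, IsProbabilityMeasure (μ₂ j)]
    {f : (Fin m₁ → Ω₁) × (Fin m₂ → Ω₂) → ℝ} (hf : Measurable f) (hfb : ∃ C, ∀ z, |f z| ≤ C)
    {c₁ : Fin m₁ → ℝ≥0} {c₂ : Fin m₂ → ℝ≥0}
    (hfc₁ : ∀ y, BoundedDifferences (fun x ↦ f (x, y)) c₁)
    (hfc₂ : ∀ x, BoundedDifferences (fun y ↦ f (x, y)) c₂) :
    HasSubgaussianMGF (fun z ↦ f z - ∫ z', f z' ∂(Measure.pi μ₁).prod (Measure.pi μ₂))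
      (∑ i, (c₁ i / 2) ^ 2 + ∑ j, (c₂ j / 2) ^ 2) ((Measure.pi μ₁).prod (Measure.pi μ₂)) := by
  obtain ⟨C, hC⟩ := hfb
  have hsec (x : Fin m₁ → Ω₁) : Integrable (fun y ↦ f (x, y)) (Measure.pi μ₂) :=
    Integrable.of_bound (hf.comp measurable_prodMk_left).aestronglyMeasurable C
      (ae_of_all _ fun y ↦ hC _)
  have hsec_bdd (x : Fin m₁ → Ω₁) : |∫ y, f (x, y) ∂Measure.pi μ₂| ≤ C := by
    simpa using norm_integral_le_of_norm_le_const (μ := Measure.pi μ₂) (f := fun y ↦ f (x, y))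
      (ae_of_all _ fun y ↦ hC (x, y))
  refine HasSubgaussianMGF.sub_integral_prod hf
    (Integrable.of_bound hf.aestronglyMeasurable C (ae_of_all _ hC)) ?_ fun x ↦
      hasSubgaussianMGF_pi_of_boundedDifferences μ₂ (hf.comp measurable_prodMk_left)
        ⟨C, fun y ↦ hC _⟩ (hfc₂ x)
  exact hasSubgaussianMGF_pi_of_boundedDifferences μ₁
    hf.stronglyMeasurable.integral_prod_right'.measurable ⟨C, hsec_bdd⟩
    (BoundedDifferences.integral hsec hfc₁)

end ProbabilityTheory

section EmpiricalVariance

variable {ι : Type*} [Fintype ι]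

def empiricalVariance (a : ι → ℝ) : ℝ :=
  (∑ i, a i ^ 2) / Fintype.card ι - ((∑ i, a i) / Fintype.card ι) ^ 2

lemma abs_sum_div_card_le [Nonempty ι] {a : ι → ℝ} {B : ℝ} (ha : ∀ i, |a i| ≤ B) :
    |(∑ i, a i) / Fintype.card ι| ≤ B := by
  rw [abs_div, Nat.abs_cast, div_le_iff₀ (by positivity)]
  calc |∑ i, a i| ≤ ∑ i, |a i| := abs_sum_le_sum_abs _ _
    _ ≤ ∑ _i : ι, B := sum_le_sum fun i _ ↦ ha i
    _ = B * Fintype.card ι := by simp [mul_comm]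

lemma abs_empiricalVariance_le {a : ι → ℝ} {B : ℝ} (ha : ∀ i, |a i| ≤ B) :
    |empiricalVariance a| ≤ B ^ 2 := by
  rcases isEmpty_or_nonempty ι with hι | hι
  · simp [empiricalVariance, sq_nonneg]
  have h₁ := abs_sum_div_card_le fun i ↦ (by rw [abs_pow]; gcongr; exact ha i : |a i ^ 2| ≤ B ^ 2)
  have h₂ := sq_le_sq' (abs_le.1 (abs_sum_div_card_le ha)).1 (abs_le.1 (abs_sum_div_card_le ha)).2
  have h₃ : 0 ≤ (∑ i, a i ^ 2) / Fintype.card ι := by positivity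
  rw [empiricalVariance, abs_le]
  constructor <;> nlinarith [abs_le.1 h₁, sq_nonneg ((∑ i, a i) / Fintype.card ι)]

lemma abs_empiricalVariance_sub_le {a b : ι → ℝ} {B : ℝ} (ha : ∀ i, |a i| ≤ B)
    (hb : ∀ i, |b i| ≤ B) :
    |empiricalVariance b - empiricalVariance a| ≤ 4 * B * (∑ i, |b i - a i|) / Fintype.card ι := by
  rcases isEmpty_or_nonempty ι with hι | hι
  · simp [empiricalVariance]
  set N : ℝ := (Fintype.card ι : ℝ)
  set D := ∑ i, |b i - a i|
  have hN : 0 < N := by positivity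
  have hB : 0 ≤ B := (abs_nonneg _).trans (ha (Classical.arbitrary ι))
  have hsq : |∑ i, (b i ^ 2 - a i ^ 2)| ≤ 2 * B * D := by
    rw [mul_sum]
    refine (abs_sum_le_sum_abs _ _).trans (sum_le_sum fun i _ ↦ ?_)
    rw [show b i ^ 2 - a i ^ 2 = (b i - a i) * (b i + a i) by ring, abs_mul, mul_comm]
    gcongr
    exact (abs_add_le _ _).trans (by linarith [ha i, hb i])
  have hmean : |(∑ i, b i) / N - (∑ i, a i) / N| ≤ D / N := by
    rw [← sub_div, ← sum_sub_distrib, abs_div, abs_of_pos hN]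
    gcongr
    exact abs_sum_le_sum_abs _ _
  have hmean' : |(∑ i, b i) / N + (∑ i, a i) / N| ≤ 2 * B :=
    (abs_add_le _ _).trans (by linarith [abs_sum_div_card_le ha, abs_sum_div_card_le hb])
  have hsplit : empiricalVariance b - empiricalVariance a = (∑ i, (b i ^ 2 - a i ^ 2)) / N
      - ((∑ i, b i) / N - (∑ i, a i) / N) * ((∑ i, b i) / N + (∑ i, a i) / N) := by
    rw [empiricalVariance, empiricalVariance, sum_sub_distrib]
    ring
  rw [hsplit]
  calc _ ≤ |∑ i, (b i ^ 2 - a i ^ 2)| / N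
        + |(∑ i, b i) / N - (∑ i, a i) / N| * |(∑ i, b i) / N + (∑ i, a i) / N| := by
        rw [← abs_mul, ← abs_of_pos hN, ← abs_div, abs_of_pos hN]
        exact abs_sub _ _
    _ ≤ 2 * B * D / N + D / N * (2 * B) := by gcongr
    _ = 4 * B * D / N := by ring

end EmpiricalVariance

section SigmaHat

variable {𝓧 : Type*} {n : ℕ} {k : 𝓧 → 𝓧 → ℝ} {ν : ℝ}

lemma sigmaHatSq_eq_empiricalVariance (k : 𝓧 → 𝓧 → ℝ) (sp : (Fin n → 𝓧) × (Fin n → 𝓧)) :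
    sigmaHatSq k sp = 4 * empiricalVariance fun i ↦ (∑ j, Hmat k sp i j) / n := by
  simp only [sigmaHatSq, empiricalVariance, Fintype.card_fin, div_pow, ← sum_div]
  ring

lemma abs_Hmat_le (hbdd : ∀ x y, |k x y| ≤ ν) (sp : (Fin n → 𝓧) × (Fin n → 𝓧)) (i j : Fin n) :
    |Hmat k sp i j| ≤ 4 * ν := by
  have h₁ := abs_le.1 (hbdd (sp.1 i) (sp.1 j))
  have h₂ := abs_le.1 (hbdd (sp.2 i) (sp.2 j))
  have h₃ := abs_le.1 (hbdd (sp.1 i) (sp.2 j))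
  have h₄ := abs_le.1 (hbdd (sp.1 j) (sp.2 i))
  rw [Hmat, abs_le]
  constructor <;> linarith

lemma abs_Hmat_update_fst_sub_le (hbdd : ∀ x y, |k x y| ≤ ν) (X Y : Fin n → 𝓧) (m : Fin n)
    (z : 𝓧) (i j : Fin n) :
    |Hmat k (Function.update X m z, Y) i j - Hmat k (X, Y) i j| ≤
      4 * ν * ((if i = m then 1 else 0) + (if j = m then 1 else 0)) := by
  have hk (a b : 𝓧) := abs_le.1 (hbdd a b)
  by_cases hi : i = m <;> by_cases hj : j = m
  · subst i j
    simp only [Hmat, Function.update_self, if_true, abs_le]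
    constructor <;> linarith [hk z z, hk (X m) (X m), hk z (Y m), hk (X m) (Y m)]
  · subst i
    simp only [Hmat, Function.update_self, Function.update_of_ne hj, if_true, if_neg hj, abs_le]
    constructor <;> linarith [hk z (X j), hk (X m) (X j), hk z (Y j), hk (X m) (Y j)]
  · subst j
    simp only [Hmat, Function.update_self, Function.update_of_ne hi, if_true, if_neg hi, abs_le]
    constructor <;> linarith [hk (X i) z, hk (X i) (X m), hk z (Y i), hk (X m) (Y i)]
  · simp [Hmat, hi, hj]

lemma Hmat_swap (k : 𝓧 → 𝓧 → ℝ) (X Y : Fin n → 𝓧) (i j : Fin n) :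
    Hmat k (X, Y) i j = Hmat (flip k) (Y, X) j i := by
  simp only [Hmat, flip]
  ring

lemma abs_Hmat_update_snd_sub_le (hbdd : ∀ x y, |k x y| ≤ ν) (X Y : Fin n → 𝓧) (m : Fin n)
    (z : 𝓧) (i j : Fin n) :
    |Hmat k (X, Function.update Y m z) i j - Hmat k (X, Y) i j| ≤
      4 * ν * ((if i = m then 1 else 0) + (if j = m then 1 else 0)) := by
  rw [Hmat_swap, Hmat_swap k, add_comm (ite _ _ _)]
  exact abs_Hmat_update_fst_sub_le (fun x y ↦ hbdd y x) Y X m z j i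

lemma abs_sum_Hmat_div_le (hbdd : ∀ x y, |k x y| ≤ ν) (sp : (Fin n → 𝓧) × (Fin n → 𝓧)) (i : Fin n) :
    |(∑ j, Hmat k sp i j) / n| ≤ 4 * ν := by
  have : Nonempty (Fin n) := ⟨i⟩
  simpa using abs_sum_div_card_le (abs_Hmat_le hbdd sp i)

lemma abs_sigmaHatSq_le (hbdd : ∀ x y, |k x y| ≤ ν) (sp : (Fin n → 𝓧) × (Fin n → 𝓧)) :
    |sigmaHatSq k sp| ≤ 64 * ν ^ 2 := by
  rw [sigmaHatSq_eq_empiricalVariance, abs_mul, abs_of_pos four_pos]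
  linarith [abs_empiricalVariance_le (abs_sum_Hmat_div_le hbdd sp)]

lemma abs_sigmaHatSq_sub_le (hbdd : ∀ x y, |k x y| ≤ ν) (sp sp' : (Fin n → 𝓧) × (Fin n → 𝓧))
    (m : Fin n) (hH : ∀ i j, |Hmat k sp' i j - Hmat k sp i j| ≤
      4 * ν * ((if i = m then 1 else 0) + (if j = m then 1 else 0))) :
    |sigmaHatSq k sp' - sigmaHatSq k sp| ≤ 512 * ν ^ 2 / n := by
  have hν : 0 ≤ ν := (abs_nonneg _).trans (hbdd (sp.1 m) (sp.1 m))
  have hn : (0 : ℝ) < n := by exact_mod_cast m.pos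
  have hD : ∑ i, |(∑ j, Hmat k sp' i j) / n - (∑ j, Hmat k sp i j) / n| ≤ 8 * ν := by
    calc _ = ∑ i, |∑ j, (Hmat k sp' i j - Hmat k sp i j)| / n := by
          simp only [← sub_div, ← sum_sub_distrib, abs_div, Nat.abs_cast]
      _ ≤ ∑ i, ∑ j, 4 * ν * ((if i = m then 1 else 0) + (if j = m then 1 else 0)) / n := by
          gcongr with i
          rw [← sum_div]
          gcongr
          exact (abs_sum_le_sum_abs _ _).trans (sum_le_sum fun j _ ↦ hH i j)
      _ = 8 * ν := by
          simp only [← sum_div, ← mul_sum, sum_add_distrib, sum_ite_eq', mem_univ, if_true,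
            sum_const, card_univ, Fintype.card_fin, nsmul_eq_mul]
          field_simp
          ring
  rw [sigmaHatSq_eq_empiricalVariance, sigmaHatSq_eq_empiricalVariance, ← mul_sub, abs_mul,
    abs_of_pos four_pos]
  have := abs_empiricalVariance_sub_le (abs_sum_Hmat_div_le hbdd sp) (abs_sum_Hmat_div_le hbdd sp')
  rw [Fintype.card_fin] at this
  calc _ ≤ 4 * (4 * (4 * ν) * (8 * ν) / n) := by gcongr; exact this.trans (by gcongr)
    _ = 512 * ν ^ 2 / n := by ring

lemma boundedDifferences_sigmaHatSq_fst (hbdd : ∀ x y, |k x y| ≤ ν) (Y : Fin n → 𝓧) :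
    BoundedDifferences (fun X ↦ sigmaHatSq k (X, Y)) fun _ ↦ (512 * ν ^ 2 / n).toNNReal :=
  fun X m z ↦ by
    rw [Real.coe_toNNReal _ (by positivity)]
    exact abs_sigmaHatSq_sub_le hbdd _ _ m (abs_Hmat_update_fst_sub_le hbdd X Y m z)

lemma boundedDifferences_sigmaHatSq_snd (hbdd : ∀ x y, |k x y| ≤ ν) (X : Fin n → 𝓧) :
    BoundedDifferences (fun Y ↦ sigmaHatSq k (X, Y)) fun _ ↦ (512 * ν ^ 2 / n).toNNReal :=
  fun Y m z ↦ by
    rw [Real.coe_toNNReal _ (by positivity)]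
    exact abs_sigmaHatSq_sub_le hbdd _ _ m (abs_Hmat_update_snd_sub_le hbdd X Y m z)

lemma measurable_sigmaHatSq [MeasurableSpace 𝓧] (hmeas : Measurable fun p : 𝓧 × 𝓧 ↦ k p.1 p.2) :
    Measurable (sigmaHatSq k : (Fin n → 𝓧) × (Fin n → 𝓧) → ℝ) := by
  have hk {u v : (Fin n → 𝓧) × (Fin n → 𝓧) → 𝓧} (hu : Measurable u) (hv : Measurable v) :
      Measurable fun sp ↦ k (u sp) (v sp) := hmeas.comp (hu.prodMk hv)
  have hH (i j : Fin n) : Measurable fun sp ↦ Hmat k sp i j := by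
    unfold Hmat
    fun_prop
  unfold sigmaHatSq
  fun_prop

end SigmaHat

theorem sigmaHatSq_concentration_general {𝓧 : Type*} [MeasurableSpace 𝓧]
    (k : 𝓧 → 𝓧 → ℝ)
    (hmeas : Measurable fun p : 𝓧 × 𝓧 => k p.1 p.2)
    (ν : ℝ) (hbdd : ∀ x y, |k x y| ≤ ν)
    (P Q : Measure 𝓧) [IsProbabilityMeasure P] [IsProbabilityMeasure Q]
    (n : ℕ) (δ : ℝ) (hδ : 0 < δ) :
    ENNReal.ofReal (1 - δ) ≤
      sampleMeasure P Q n
        {sp | |sigmaHatSq k sp - ∫ sp', sigmaHatSq k sp' ∂(sampleMeasure P Q n)| ≤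
          448 * ν ^ 2 * Real.sqrt ((2 / (n : ℝ)) * Real.log (2 / δ))} := by
  set c := (512 * ν ^ 2 / n).toNNReal
  have hsub := hasSubgaussianMGF_prod_pi_of_boundedDifferences (fun _ : Fin n ↦ P)
    (fun _ : Fin n ↦ Q) (measurable_sigmaHatSq hmeas) ⟨_, abs_sigmaHatSq_le hbdd⟩
    (boundedDifferences_sigmaHatSq_fst hbdd) (boundedDifferences_sigmaHatSq_snd hbdd)
  have : IsProbabilityMeasure (sampleMeasure P Q n) := by
    unfold sampleMeasure
    infer_instance
  refine ENNReal.ofReal_le_of_le_toReal (hsub.one_sub_le_measureReal_abs_le hδ (by positivity) ?_)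
  set x := 2 / (n : ℝ) * log (2 / δ)
  have hx : x ≤ √x ^ 2 := by
    rw [Real.sq_sqrt']
    exact le_max_left _ _
  have hvar : 2 * ((∑ _i : Fin n, (c / 2) ^ 2 + ∑ _j : Fin n, (c / 2) ^ 2 : ℝ≥0) : ℝ)
      * log (2 / δ) = 131072 * ν ^ 4 * x := by
    have hc : (c : ℝ) = 512 * ν ^ 2 / n := Real.coe_toNNReal _ (by positivity)
    push_cast [hc]
    simp only [sum_const, card_univ, Fintype.card_fin, nsmul_eq_mul, x]
    rcases eq_or_ne n 0 with rfl | hn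
    · simp
    field_simp
    ring
  rw [hvar]
  nlinarith [mul_le_mul_of_nonneg_left hx (by positivity : (0 : ℝ) ≤ ν ^ 4),
    (by positivity : (0 : ℝ) ≤ ν ^ 4 * √x ^ 2)]

/-- McDiarmid concentration of the variance estimator `σ̂²` around its mean for a
fixed bounded symmetric kernel. -/
theorem sigmaHatSq_concentration {𝓧 : Type*} [MeasurableSpace 𝓧]
    (k : 𝓧 → 𝓧 → ℝ) (hsymm : ∀ x y, k x y = k y x)
    (hmeas : Measurable fun p : 𝓧 × 𝓧 => k p.1 p.2)
    (ν : ℝ) (hbdd : ∀ x y, |k x y| ≤ ν)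
    (P Q : Measure 𝓧) [IsProbabilityMeasure P] [IsProbabilityMeasure Q]
    (n : ℕ) (hn : 1 ≤ n) (δ : ℝ) (hδ : 0 < δ) (hδ1 : δ < 1) :
    ENNReal.ofReal (1 - δ) ≤
      sampleMeasure P Q n
        {sp | |sigmaHatSq k sp - ∫ sp', sigmaHatSq k sp' ∂(sampleMeasure P Q n)| ≤
          448 * ν ^ 2 * Real.sqrt ((2 / (n : ℝ)) * Real.log (2 / δ))} :=
  sigmaHatSq_concentration_general k hmeas ν hbdd P Q n δ hδ
end
end

section
/- Let k be a fixed symmetric kernel with |k(x,y)| ≤ ν for all x, y. Then the variance estimator satisfies | E[σ̂_k²] − σ_k² | ≤ 1152·ν²/n, where σ_k² = 4·( E[H_{12}·H_{13}] − E[H_{12}]² ). -/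
open MeasureTheory Finset

noncomputable section

/-!
Pair the samples as `Z_i = (X_i, Y_i)`, i.i.d. with law `P ⊗ Q`, so that `H_{ij} = h(Z_i, Z_j)`
with `|h| ≤ 4ν`. Expanding the squares writes `σ̂²` as `4 (V₃ - V₄)`, where `V_m` is the
V-statistic averaging a bounded kernel `g` of `m` arguments over all `n^m` index tuples. Along
an injective tuple the selected points are again i.i.d., so such a term has expectation `E g`,
which is `E[H₁₂H₁₃]` for `V₃` and `E[H₁₂]²` for `V₄`. Every other term is off by at most
`2‖g‖∞`, and at most `(m choose 2) n^(m-1)` of the `n^m` tuples are not injective. With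
`‖g‖∞ ≤ 16ν²` this gives `4 (3 + 6) · 2 · 16ν² / n = 1152ν²/n`.
-/

open ProbabilityTheory Function

-- `n ^ m - n.descFactorial m ≤ (m choose 2) n ^ (m - 1)`, multiplied by `n` to avoid subtraction.
theorem Nat.pow_succ_le_mul_descFactorial_add (n m : ℕ) :
    n ^ (m + 1) ≤ n * n.descFactorial m + m.choose 2 * n ^ m := by
  induction m with
  | zero => simp
  | succ m ih =>
    have hsplit : n * n.descFactorial m ≤ (n - m) * n.descFactorial m + m * n ^ m :=
      calc n * n.descFactorial m ≤ ((n - m) + m) * n.descFactorial m :=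
            Nat.mul_le_mul_right _ le_tsub_add
        _ ≤ (n - m) * n.descFactorial m + m * n ^ m := by
          rw [add_mul]; gcongr; exact n.descFactorial_le_pow m
    rw [Nat.descFactorial_succ, Nat.choose_succ_succ, Nat.choose_one_right, pow_succ _ (m + 1),
      pow_succ _ m]
    rw [pow_succ] at ih
    nlinarith

theorem card_mul_card_filter_not_injective_le {α : Type*} [Fintype α] [DecidableEq α] (m : ℕ) :
    Fintype.card α * #{t : Fin m → α | ¬Injective t} ≤ m.choose 2 * Fintype.card α ^ m := by
  have hinj : #{t : Fin m → α | Injective t} = (Fintype.card α).descFactorial m := by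
    rw [← Fintype.card_subtype, Fintype.card_congr (Equiv.subtypeInjectiveEquivEmbedding _ _),
      Fintype.card_embedding_eq, Fintype.card_fin]
  have htot := card_filter_add_card_filter_not (s := (univ : Finset (Fin m → α)))
    (fun t => Injective t)
  rw [card_univ, Fintype.card_fun, Fintype.card_fin, hinj] at htot
  have hpow := Nat.pow_succ_le_mul_descFactorial_add (Fintype.card α) m
  rw [pow_succ', ← htot, mul_add] at hpow
  rw [← htot]
  linarith

theorem sum_pi_fin_succ {α M : Type*} [Fintype α] [AddCommMonoid M] {m : ℕ}
    (f : (Fin (m + 1) → α) → M) : ∑ t, f t = ∑ a, ∑ t, f (Fin.cons a t) := by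
  rw [← (Fin.consEquiv fun _ => α).sum_comp, Fintype.sum_prod_type]
  rfl

theorem sum_sq_sum_eq_sum_pi_fin_three {α R : Type*} [Fintype α] [CommSemiring R]
    (x : α → α → R) :
    ∑ i, (∑ j, x i j) ^ 2 = ∑ t : Fin 3 → α, x (t 0) (t 1) * x (t 0) (t 2) := by
  simp only [sum_pi_fin_succ (m := 2), sum_pi_fin_succ (m := 1), sum_pi_fin_succ (m := 0),
    Fintype.sum_unique, sq, sum_mul_sum]
  rfl

theorem sq_sum_sum_eq_sum_pi_fin_four {α R : Type*} [Fintype α] [CommSemiring R]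
    (x : α → α → R) :
    (∑ i, ∑ j, x i j) ^ 2 = ∑ t : Fin 4 → α, x (t 0) (t 1) * x (t 2) (t 3) := by
  simp only [sum_pi_fin_succ (m := 3), sum_pi_fin_succ (m := 2), sum_pi_fin_succ (m := 1),
    sum_pi_fin_succ (m := 0), Fintype.sum_unique, sq, sum_mul_sum]
  exact sum_congr rfl fun _ _ => sum_comm

theorem abs_sum_sub_card_mul_le {T : Type*} [Fintype T] (F : T → ℝ) (p : T → Prop)
    [DecidablePred p] {C B : ℝ} (hp : ∀ t, p t → F t = C) (hB : ∀ t, |F t - C| ≤ B) :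
    |∑ t, F t - Fintype.card T * C| ≤ #{t | ¬p t} * B := by
  have hsum : ∑ t, F t - Fintype.card T * C = ∑ t with ¬p t, (F t - C) := by
    rw [← card_univ, ← nsmul_eq_mul, ← sum_const, ← sum_sub_distrib,
      ← sum_filter_add_sum_filter_not univ p, sum_eq_zero fun t ht => ?_, zero_add]
    rw [hp t (mem_filter.1 ht).2, sub_self]
  rw [hsum]
  exact (abs_sum_le_sum_abs _ _).trans (by simpa using sum_le_card_nsmul _ _ B fun t _ => hB t)

theorem abs_mul_le_of_forall_abs_le {E : Type*} {h : E → E → ℝ} {c : ℝ}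
    (hb : ∀ x y, |h x y| ≤ c) (x y x' y' : E) : |h x y * h x' y'| ≤ c * c := by
  rw [abs_mul]
  exact mul_le_mul (hb _ _) (hb _ _) (abs_nonneg _) ((abs_nonneg _).trans (hb x y))

theorem integrable_of_forall_abs_le {α : Type*} [MeasurableSpace α] {ν : Measure α}
    [IsFiniteMeasure ν] {f : α → ℝ} (hf : Measurable f) {B : ℝ} (hB : ∀ x, |f x| ≤ B) :
    Integrable f ν :=
  .of_bound hf.aestronglyMeasurable B (ae_of_all _ fun x => (Real.norm_eq_abs _).trans_le (hB x))

theorem abs_integral_le_of_forall_abs_le {α : Type*} [MeasurableSpace α] {ν : Measure α}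
    [IsProbabilityMeasure ν] {f : α → ℝ} {B : ℝ} (hB : ∀ x, |f x| ≤ B) : |∫ x, f x ∂ν| ≤ B := by
  simpa using norm_integral_le_of_norm_le_const (μ := ν)
    (ae_of_all _ fun x => (Real.norm_eq_abs _).trans_le (hB x))

section IIDSample

variable {E : Type*} [MeasurableSpace E] (μ : Measure E) [IsProbabilityMeasure μ]

theorem measurePreserving_comp_of_injective {ι κ : Type*} [Fintype ι] [Fintype κ]
    {t : κ → ι} (ht : Injective t) :
    MeasurePreserving (fun z : ι → E => z ∘ t) (Measure.pi fun _ => μ)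
      (Measure.pi fun _ => μ) := by
  have hind : iIndepFun (fun l (z : ι → E) => z (t l)) (Measure.pi fun _ => μ) :=
    (iIndepFun_pi (X := fun _ => id) fun _ => aemeasurable_id).precomp ht
  refine ⟨measurable_pi_lambda _ fun l => measurable_pi_apply (t l), ?_⟩
  change Measure.map (fun (z : ι → E) l => z (t l)) _ = _
  rw [(iIndepFun_iff_map_fun_eq_pi_map fun l => (measurable_pi_apply (t l)).aemeasurable).1 hind]
  simp_rw [(measurePreserving_eval (fun _ : ι => μ) _).map_eq]

theorem integral_pi_fin_succ {m : ℕ} {g : (Fin (m + 1) → E) → ℝ}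
    (hg : Integrable g (Measure.pi fun _ => μ)) :
    ∫ w, g w ∂(Measure.pi fun _ => μ)
      = ∫ a, ∫ w, g (Fin.cons a w) ∂(Measure.pi fun _ => μ) ∂μ := by
  have hmp := (measurePreserving_piFinSuccAbove (fun _ : Fin (m + 1) => μ) 0).symm
  rw [← hmp.integral_comp', integral_prod]
  · simp [MeasurableEquiv.piFinSuccAbove_symm_apply, Fin.insertNthEquiv]
  · exact hmp.integrable_comp_emb (MeasurableEquiv.measurableEmbedding _) |>.2 hg

theorem integral_pi_fin_two {F : E → E → ℝ} (hF : Integrable (uncurry F) (μ.prod μ)) :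
    ∫ w : Fin 2 → E, F (w 0) (w 1) ∂(Measure.pi fun _ => μ) = ∫ a, ∫ b, F a b ∂μ ∂μ :=
  calc _ = ∫ p, uncurry F p ∂(μ.prod μ) :=
        (measurePreserving_finTwoArrow μ).integral_comp' (uncurry F)
    _ = _ := integral_prod _ hF

def vStatistic {n m : ℕ} (g : (Fin m → E) → ℝ) (z : Fin n → E) : ℝ :=
  (∑ t : Fin m → Fin n, g (z ∘ t)) / n ^ m

variable {m : ℕ} {g : (Fin m → E) → ℝ} (hg : Measurable g) {B : ℝ} (hB : ∀ w, |g w| ≤ B)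
include hg hB

theorem integrable_vStatistic_summand {n : ℕ} (t : Fin m → Fin n) :
    Integrable (fun z : Fin n → E => g (z ∘ t)) (Measure.pi fun _ => μ) :=
  integrable_of_forall_abs_le (hg.comp (measurable_pi_lambda _ fun l => measurable_pi_apply (t l)))
    fun _ => hB _

theorem integrable_vStatistic (n : ℕ) :
    Integrable (vStatistic g) (Measure.pi fun _ : Fin n => μ) :=
  (integrable_finsetSum _ fun t _ => integrable_vStatistic_summand μ hg hB t).div_const _

theorem abs_integral_vStatistic_sub_le {n : ℕ} (hn : 0 < n) :
    |∫ z, vStatistic g z ∂(Measure.pi fun _ : Fin n => μ) - ∫ w, g w ∂(Measure.pi fun _ => μ)|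
      ≤ 2 * m.choose 2 * B / n := by
  have := nonempty_of_isProbabilityMeasure μ
  have hB0 : 0 ≤ B := (abs_nonneg _).trans (hB (Classical.arbitrary _))
  have hmean : ∀ t : Fin m → Fin n, Injective t →
      ∫ z, g (z ∘ t) ∂(Measure.pi fun _ => μ) = ∫ w, g w ∂(Measure.pi fun _ => μ) := by
    intro t ht
    have hmp := measurePreserving_comp_of_injective μ ht
    rw [← hmp.map_eq, integral_map hmp.measurable.aemeasurable hg.aestronglyMeasurable]
  have hdev : ∀ t : Fin m → Fin n,
      |∫ z, g (z ∘ t) ∂(Measure.pi fun _ => μ) - ∫ w, g w ∂(Measure.pi fun _ => μ)| ≤ 2 * B :=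
    fun t => (abs_sub _ _).trans <| by
      linarith [abs_integral_le_of_forall_abs_le (ν := Measure.pi fun _ => μ) fun z => hB (z ∘ t),
        abs_integral_le_of_forall_abs_le (ν := Measure.pi fun _ => μ) hB]
  have hsum := abs_sum_sub_card_mul_le _ _ hmean hdev
  have hcount := card_mul_card_filter_not_injective_le (α := Fin n) m
  simp only [Fintype.card_fun, Fintype.card_fin, Nat.cast_pow] at hsum hcount
  have hnm : (0 : ℝ) < n ^ m := by positivity
  have hint : ∫ z, vStatistic g z ∂(Measure.pi fun _ : Fin n => μ)
      = (∑ t : Fin m → Fin n, ∫ z, g (z ∘ t) ∂(Measure.pi fun _ => μ)) / n ^ m := by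
    rw [← integral_finsetSum _ fun t _ => integrable_vStatistic_summand μ hg hB t, ← integral_div]
    rfl
  rw [hint, div_sub' hnm.ne', abs_div, abs_of_pos hnm, div_le_div_iff₀ hnm (by positivity)]
  calc _ ≤ (#{t : Fin m → Fin n | ¬Injective t} * (2 * B)) * n := by gcongr
    _ = 2 * B * ((n * #{t : Fin m → Fin n | ¬Injective t} : ℕ) : ℝ) := by push_cast; ring
    _ ≤ 2 * B * ((m.choose 2 * n ^ m : ℕ) : ℝ) := by gcongr
    _ = _ := by push_cast; ring

end IIDSample

section ProductKernels

variable {E : Type*} [MeasurableSpace E] (μ : Measure E) [IsProbabilityMeasure μ]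
  {h : E → E → ℝ} (hm : Measurable (uncurry h)) {c : ℝ} (hb : ∀ x y, |h x y| ≤ c)
include hm hb

theorem integral_pi_fin_three_mul :
    ∫ w, h (w 0) (w 1) * h (w 0) (w 2) ∂(Measure.pi fun _ : Fin 3 => μ)
      = ∫ u, ∫ v, ∫ w, h u v * h u w ∂μ ∂μ ∂μ :=
  calc _ = ∫ u, ∫ w : Fin 2 → E, h u (w 0) * h u (w 1) ∂(Measure.pi fun _ => μ) ∂μ :=
        integral_pi_fin_succ μ (integrable_of_forall_abs_le (by fun_prop)
          fun _ => abs_mul_le_of_forall_abs_le hb _ _ _ _)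
    _ = _ := integral_congr_ae (ae_of_all _ fun u =>
        integral_pi_fin_two μ (F := fun v w => h u v * h u w)
          (integrable_of_forall_abs_le (by fun_prop)
            fun _ => abs_mul_le_of_forall_abs_le hb _ _ _ _))

theorem integral_pi_fin_four_mul :
    ∫ w, h (w 0) (w 1) * h (w 2) (w 3) ∂(Measure.pi fun _ : Fin 4 => μ)
      = (∫ u, ∫ v, h u v ∂μ ∂μ) ^ 2 := by
  have hpair : ∫ w : Fin 2 → E, h (w 0) (w 1) ∂(Measure.pi fun _ => μ)
      = ∫ u, ∫ v, h u v ∂μ ∂μ :=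
    integral_pi_fin_two μ (integrable_of_forall_abs_le hm fun _ => hb _ _)
  calc _ = ∫ u, ∫ w : Fin 3 → E, h u (w 0) * h (w 1) (w 2) ∂(Measure.pi fun _ => μ) ∂μ :=
        integral_pi_fin_succ μ (integrable_of_forall_abs_le (by fun_prop)
          fun _ => abs_mul_le_of_forall_abs_le hb _ _ _ _)
    _ = ∫ u, ∫ v, ∫ w : Fin 2 → E, h u v * h (w 0) (w 1) ∂(Measure.pi fun _ => μ) ∂μ ∂μ :=
        integral_congr_ae (ae_of_all _ fun u => integral_pi_fin_succ μ
          (integrable_of_forall_abs_le (by fun_prop)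
            fun _ => abs_mul_le_of_forall_abs_le hb _ _ _ _))
    _ = _ := by simp only [integral_const_mul, hpair, integral_mul_const, sq]

end ProductKernels

theorem measurable_uncurry_hPair {𝓧 : Type*} [MeasurableSpace 𝓧] {k : 𝓧 → 𝓧 → ℝ}
    (hk : Measurable (uncurry k)) : Measurable (uncurry (hPair k)) := by
  unfold hPair; fun_prop

theorem abs_hPair_le {𝓧 : Type*} {k : 𝓧 → 𝓧 → ℝ} {ν : ℝ} (hk : ∀ x y, |k x y| ≤ ν)
    (u v : 𝓧 × 𝓧) : |hPair k u v| ≤ 4 * ν := by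
  unfold hPair
  refine abs_le.2 ⟨?_, ?_⟩ <;> linarith [abs_le.1 (hk u.1 v.1), abs_le.1 (hk u.2 v.2),
    abs_le.1 (hk u.1 v.2), abs_le.1 (hk v.1 u.2)]

theorem sigmaHatSq_eq_vStatistic {𝓧 : Type*} {n : ℕ} (k : 𝓧 → 𝓧 → ℝ)
    (sp : (Fin n → 𝓧) × (Fin n → 𝓧)) :
    sigmaHatSq k sp =
      4 * (vStatistic (fun w : Fin 3 → 𝓧 × 𝓧 => hPair k (w 0) (w 1) * hPair k (w 0) (w 2))
          (fun i => (sp.1 i, sp.2 i))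
        - vStatistic (fun w : Fin 4 → 𝓧 × 𝓧 => hPair k (w 0) (w 1) * hPair k (w 2) (w 3))
          (fun i => (sp.1 i, sp.2 i))) := by
  rw [sigmaHatSq, sum_sq_sum_eq_sum_pi_fin_three, sq_sum_sum_eq_sum_pi_fin_four]
  simp only [vStatistic, div_eq_inv_mul, mul_one]
  rfl

theorem integral_sigmaHatSq {𝓧 : Type*} [MeasurableSpace 𝓧] {k : 𝓧 → 𝓧 → ℝ}
    (hk : Measurable (uncurry k)) {ν : ℝ} (hbdd : ∀ x y, |k x y| ≤ ν)
    (P Q : Measure 𝓧) [IsProbabilityMeasure P] [IsProbabilityMeasure Q] (n : ℕ) :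
    ∫ sp, sigmaHatSq k sp ∂(sampleMeasure P Q n) =
      4 * (∫ z, vStatistic (fun w : Fin 3 → 𝓧 × 𝓧 => hPair k (w 0) (w 1) * hPair k (w 0) (w 2)) z
          ∂(Measure.pi fun _ : Fin n => P.prod Q)
        - ∫ z, vStatistic (fun w : Fin 4 → 𝓧 × 𝓧 => hPair k (w 0) (w 1) * hPair k (w 2) (w 3)) z
          ∂(Measure.pi fun _ : Fin n => P.prod Q)) := by
  have hm := measurable_uncurry_hPair hk
  have hb := abs_mul_le_of_forall_abs_le (abs_hPair_le hbdd)
  rw [sampleMeasure, ← (measurePreserving_arrowProdEquivProdArrow 𝓧 𝓧 (Fin n)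
    (fun _ => P) (fun _ => Q)).integral_comp']
  simp_rw [sigmaHatSq_eq_vStatistic]
  rw [integral_const_mul]
  exact congrArg _ (integral_sub (integrable_vStatistic _ (by fun_prop) (fun _ => hb _ _ _ _) n)
    (integrable_vStatistic _ (by fun_prop) (fun _ => hb _ _ _ _) n))

theorem sigmaHatSq_bias_general {𝓧 : Type*} [MeasurableSpace 𝓧]
    (k : 𝓧 → 𝓧 → ℝ)
    (hmeas : Measurable fun p : 𝓧 × 𝓧 => k p.1 p.2)
    (ν : ℝ) (hbdd : ∀ x y, |k x y| ≤ ν)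
    (P Q : Measure 𝓧) [IsProbabilityMeasure P] [IsProbabilityMeasure Q]
    (n : ℕ) (hn : 1 ≤ n) :
    |(∫ sp, sigmaHatSq k sp ∂(sampleMeasure P Q n)) - sigmaSqPop k P Q| ≤
      1152 * ν ^ 2 / (n : ℝ) := by
  have hm := measurable_uncurry_hPair hmeas
  have hb := abs_hPair_le hbdd
  have hV₃ := abs_integral_vStatistic_sub_le (P.prod Q)
    (g := fun w : Fin 3 → 𝓧 × 𝓧 => hPair k (w 0) (w 1) * hPair k (w 0) (w 2)) (by fun_prop)
    (fun _ => abs_mul_le_of_forall_abs_le hb _ _ _ _) hn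
  have hV₄ := abs_integral_vStatistic_sub_le (P.prod Q)
    (g := fun w : Fin 4 → 𝓧 × 𝓧 => hPair k (w 0) (w 1) * hPair k (w 2) (w 3)) (by fun_prop)
    (fun _ => abs_mul_le_of_forall_abs_le hb _ _ _ _) hn
  rw [integral_pi_fin_three_mul _ hm hb] at hV₃
  rw [integral_pi_fin_four_mul _ hm hb] at hV₄
  rw [integral_sigmaHatSq hmeas hbdd, sigmaSqPop, hCross, etaPop]
  norm_num [Nat.choose] at hV₃ hV₄
  have hsum : 4 * (6 * (4 * ν * (4 * ν)) / n + 12 * (4 * ν * (4 * ν)) / n) = 1152 * ν ^ 2 / n := by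
    ring
  rw [abs_le] at hV₃ hV₄ ⊢
  constructor <;> linarith

/-- Bias bound for the V-statistic variance estimator:
`|E[σ̂²] - σ²| ≤ 1152 ν² / n` for a fixed bounded symmetric kernel. -/
theorem sigmaHatSq_bias {𝓧 : Type*} [MeasurableSpace 𝓧]
    (k : 𝓧 → 𝓧 → ℝ) (hsymm : ∀ x y, k x y = k y x)
    (hmeas : Measurable fun p : 𝓧 × 𝓧 => k p.1 p.2)
    (ν : ℝ) (hbdd : ∀ x y, |k x y| ≤ ν)
    (P Q : Measure 𝓧) [IsProbabilityMeasure P] [IsProbabilityMeasure Q]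
    (n : ℕ) (hn : 1 ≤ n) :
    |(∫ sp, sigmaHatSq k sp ∂(sampleMeasure P Q n)) - sigmaSqPop k P Q| ≤
      1152 * ν ^ 2 / (n : ℝ) :=
  sigmaHatSq_bias_general k hmeas ν hbdd P Q n hn
end
end

section
/- Let φ_ω be a feedforward neural network with Λ layers: φ_ω^{(0)}(x) = x and φ_ω^{(ℓ)}(x) = σ^{(ℓ)}( W_ω^{(ℓ)}·φ_ω^{(ℓ−1)}(x) + b_ω^{(ℓ)} ), where each activation map σ^{(ℓ)} is 1-Lipschitz with σ^{(ℓ)}(0) = 0, and define ‖ω‖ = max over layers ℓ ∈ {1,…,Λ} of max( ‖W_ω^{(ℓ)}‖_op, ‖b_ω^{(ℓ)}‖ ). Suppose ‖ω‖ ≤ R and ‖ω'‖ ≤ R with R > 1. Then for every input x: (1) ‖φ_ω(x)‖ ≤ R^Λ·‖x‖ + (R/(R−1))·(R^Λ − 1); (2) ‖φ_ω(x) − φ_{ω'}(x)‖ ≤ ( Λ·R^{Λ−1}·( ‖x‖ + R/(R−1) ) − (R^Λ − 1)/(R−1)² )·‖ω − ω'‖, where ‖ω − ω'‖ is computed with componentwise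 differences of the weight matrices and bias vectors. If furthermore R ≥ 2, then (3) ‖φ_ω(x)‖ ≤ R^Λ·(‖x‖ + 2) and (4) ‖φ_ω(x) − φ_{ω'}(x)‖ ≤ Λ·R^{Λ−1}·(‖x‖ + 2)·‖ω − ω'‖. -/
noncomputable section

/-- A feedforward network: `net W b σa 0 x = x`,
`net W b σa (ℓ+1) x = σa ℓ (W ℓ (net W b σa ℓ x) + b ℓ)`. -/
def net {E : ℕ → Type*} [∀ ℓ, NormedAddCommGroup (E ℓ)] [∀ ℓ, NormedSpace ℝ (E ℓ)]
    (W : ∀ ℓ : ℕ, E ℓ →L[ℝ] E (ℓ + 1)) (b : ∀ ℓ : ℕ, E (ℓ + 1))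
    (σa : ∀ ℓ : ℕ, E (ℓ + 1) → E (ℓ + 1)) : ∀ ℓ : ℕ, E 0 → E ℓ
  | 0 => id
  | (ℓ + 1) => fun x => σa ℓ (W ℓ (net W b σa ℓ x) + b ℓ)

/-! Each layer is an affine map of operator norm at most `R` followed by a non-expansive
activation, so the output norm `‖φ_ω^{(ℓ)}(x)‖` and the distance
`‖φ_ω^{(ℓ)}(x) - φ_{ω'}^{(ℓ)}(x)‖` both obey linear recursions `a (ℓ + 1) ≤ R * a ℓ + c ℓ`:
for the norm `c ℓ = R`, for the distance `c ℓ = ‖ω - ω'‖ * (‖φ_ω^{(ℓ)}(x)‖ + 1)`, into which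
the growth bound is fed.  The stated bounds are the exact solutions of these recursions, so
they dominate by comparison; for `R ≥ 2` they simplify because `R / (R - 1) ≤ 2`. -/

theorem le_of_le_mul_add_of_mul_add_le {α : Type*} [Semiring α] [PartialOrder α]
    [IsOrderedRing α] {u v c : ℕ → α} {R : α} {N : ℕ} (hR : 0 ≤ R) (h0 : u 0 ≤ v 0)
    (hu : ∀ n < N, u (n + 1) ≤ R * u n + c n) (hv : ∀ n < N, R * v n + c n ≤ v (n + 1)) :
    ∀ n ≤ N, u n ≤ v n := by
  intro n
  induction n with
  | zero => exact fun _ => h0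
  | succ n ih =>
    intro hn
    calc u (n + 1) ≤ R * u n + c n := hu n hn
      _ ≤ R * v n + c n := by gcongr; exact ih (Nat.le_of_succ_le hn)
      _ ≤ v (n + 1) := hv n hn

def growthBound (R r : ℝ) (n : ℕ) : ℝ :=
  R ^ n * r + R / (R - 1) * (R ^ n - 1)

def lipschitzBound (R r : ℝ) (n : ℕ) : ℝ :=
  n * R ^ (n - 1) * (r + R / (R - 1)) - (R ^ n - 1) / (R - 1) ^ 2

theorem growthBound_zero (R r : ℝ) : growthBound R r 0 = r := by
  simp [growthBound]

theorem growthBound_succ {R : ℝ} (hR : R ≠ 1) (r : ℝ) (n : ℕ) :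
    growthBound R r (n + 1) = R * growthBound R r n + R := by
  have : R - 1 ≠ 0 := sub_ne_zero.mpr hR
  simp only [growthBound]
  field_simp
  ring

theorem lipschitzBound_zero (R r : ℝ) : lipschitzBound R r 0 = 0 := by
  simp [lipschitzBound]

theorem lipschitzBound_succ {R : ℝ} (hR : R ≠ 1) (r : ℝ) (n : ℕ) :
    lipschitzBound R r (n + 1) = R * lipschitzBound R r n + (growthBound R r n + 1) := by
  have : R - 1 ≠ 0 := sub_ne_zero.mpr hR
  rcases n with _ | n <;>
  · simp only [lipschitzBound, growthBound, Nat.add_sub_cancel]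
    push_cast
    field_simp
    ring

theorem div_sub_one_le_two {R : ℝ} (hR : 2 ≤ R) : R / (R - 1) ≤ 2 := by
  rw [div_le_iff₀ (by linarith)]
  linarith

theorem growthBound_le_of_two_le {R : ℝ} (hR : 2 ≤ R) (r : ℝ) (n : ℕ) :
    growthBound R r n ≤ R ^ n * (r + 2) := by
  have hpow : 1 ≤ R ^ n := one_le_pow₀ (by linarith)
  calc growthBound R r n ≤ R ^ n * r + 2 * (R ^ n - 1) := by
        unfold growthBound
        gcongr
        exact div_sub_one_le_two hR
    _ ≤ R ^ n * (r + 2) := by linarith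

theorem lipschitzBound_le_of_two_le {R : ℝ} (hR : 2 ≤ R) (r : ℝ) (n : ℕ) :
    lipschitzBound R r n ≤ n * R ^ (n - 1) * (r + 2) := by
  have hpow : 1 ≤ R ^ n := one_le_pow₀ (by linarith)
  have hgeom : 0 ≤ (R ^ n - 1) / (R - 1) ^ 2 := div_nonneg (by linarith) (sq_nonneg _)
  calc lipschitzBound R r n ≤ n * R ^ (n - 1) * (r + R / (R - 1)) := by
        unfold lipschitzBound
        linarith
    _ ≤ n * R ^ (n - 1) * (r + 2) := by
        have : 0 ≤ (n : ℝ) * R ^ (n - 1) := by positivity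
        gcongr
        exact div_sub_one_le_two hR

section Network

variable {E : ℕ → Type*} [∀ ℓ, NormedAddCommGroup (E ℓ)] [∀ ℓ, NormedSpace ℝ (E ℓ)]
  {W W' : ∀ ℓ : ℕ, E ℓ →L[ℝ] E (ℓ + 1)} {b b' : ∀ ℓ : ℕ, E (ℓ + 1)}
  {σa : ∀ ℓ : ℕ, E (ℓ + 1) → E (ℓ + 1)}

theorem net_succ (ℓ : ℕ) (x : E 0) :
    net W b σa (ℓ + 1) x = σa ℓ (W ℓ (net W b σa ℓ x) + b ℓ) :=
  rfl

theorem norm_net_succ_le {ℓ : ℕ} (hσLip : LipschitzWith 1 (σa ℓ)) (hσ0 : σa ℓ 0 = 0)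
    (x : E 0) : ‖net W b σa (ℓ + 1) x‖ ≤ ‖W ℓ‖ * ‖net W b σa ℓ x‖ + ‖b ℓ‖ :=
  calc ‖net W b σa (ℓ + 1) x‖ ≤ ‖W ℓ (net W b σa ℓ x) + b ℓ‖ := by
        rw [net_succ]
        simpa using hσLip.norm_le_mul hσ0 _
    _ ≤ ‖W ℓ‖ * ‖net W b σa ℓ x‖ + ‖b ℓ‖ :=
        (norm_add_le _ _).trans (add_le_add_left ((W ℓ).le_opNorm _) _)

theorem norm_net_sub_net_succ_le {ℓ : ℕ} (hσLip : LipschitzWith 1 (σa ℓ)) (x : E 0) :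
    ‖net W b σa (ℓ + 1) x - net W' b' σa (ℓ + 1) x‖ ≤
      ‖W' ℓ‖ * ‖net W b σa ℓ x - net W' b' σa ℓ x‖ + ‖W ℓ - W' ℓ‖ * ‖net W b σa ℓ x‖ +
        ‖b ℓ - b' ℓ‖ := by
  set u := net W b σa ℓ x
  set u' := net W' b' σa ℓ x
  have hsplit : (W ℓ u + b ℓ) - (W' ℓ u' + b' ℓ) =
      W' ℓ (u - u') + (W ℓ - W' ℓ) u + (b ℓ - b' ℓ) := by
    simp only [map_sub, sub_apply]
    abel
  calc ‖net W b σa (ℓ + 1) x - net W' b' σa (ℓ + 1) x‖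
        ≤ ‖(W ℓ u + b ℓ) - (W' ℓ u' + b' ℓ)‖ := by
        rw [net_succ, net_succ]
        simpa using hσLip.norm_sub_le (W ℓ u + b ℓ) (W' ℓ u' + b' ℓ)
    _ ≤ ‖W' ℓ (u - u')‖ + ‖(W ℓ - W' ℓ) u‖ + ‖b ℓ - b' ℓ‖ := by
        rw [hsplit]
        exact norm_add₃_le
    _ ≤ ‖W' ℓ‖ * ‖u - u'‖ + ‖W ℓ - W' ℓ‖ * ‖u‖ + ‖b ℓ - b' ℓ‖ := by
        gcongr <;> exact ContinuousLinearMap.le_opNorm _ _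

variable {R : ℝ} {N : ℕ}

theorem norm_net_le_growthBound (hσLip : ∀ ℓ, LipschitzWith 1 (σa ℓ)) (hσ0 : ∀ ℓ, σa ℓ 0 = 0)
    (hR : 0 ≤ R) (hR1 : R ≠ 1) (hW : ∀ ℓ < N, ‖W ℓ‖ ≤ R) (hb : ∀ ℓ < N, ‖b ℓ‖ ≤ R) (x : E 0) :
    ∀ n ≤ N, ‖net W b σa n x‖ ≤ growthBound R ‖x‖ n := by
  refine le_of_le_mul_add_of_mul_add_le (c := fun _ => R) hR (by simp [net, growthBound_zero])
    (fun n hn => ?_) (fun n _ => (growthBound_succ hR1 _ n).ge)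
  calc ‖net W b σa (n + 1) x‖ ≤ ‖W n‖ * ‖net W b σa n x‖ + ‖b n‖ :=
        norm_net_succ_le (hσLip n) (hσ0 n) x
    _ ≤ R * ‖net W b σa n x‖ + R := by gcongr; exacts [hW n hn, hb n hn]

theorem norm_net_sub_net_le_lipschitzBound (hσLip : ∀ ℓ, LipschitzWith 1 (σa ℓ))
    (hσ0 : ∀ ℓ, σa ℓ 0 = 0) (hR : 0 ≤ R) (hR1 : R ≠ 1) (hW : ∀ ℓ < N, ‖W ℓ‖ ≤ R)
    (hb : ∀ ℓ < N, ‖b ℓ‖ ≤ R) (hW' : ∀ ℓ < N, ‖W' ℓ‖ ≤ R) {Δ : ℝ}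
    (hWΔ : ∀ ℓ < N, ‖W ℓ - W' ℓ‖ ≤ Δ) (hbΔ : ∀ ℓ < N, ‖b ℓ - b' ℓ‖ ≤ Δ) (x : E 0) :
    ∀ n ≤ N, ‖net W b σa n x - net W' b' σa n x‖ ≤ lipschitzBound R ‖x‖ n * Δ := by
  refine le_of_le_mul_add_of_mul_add_le (c := fun n => (growthBound R ‖x‖ n + 1) * Δ) hR
    (by simp [net, lipschitzBound_zero]) (fun n hn => ?_)
    (fun n _ => by rw [lipschitzBound_succ hR1]; linarith)
  have hΔ : 0 ≤ Δ := (norm_nonneg _).trans (hWΔ n hn)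
  have hgrowth := norm_net_le_growthBound hσLip hσ0 hR hR1 hW hb x n hn.le
  calc ‖net W b σa (n + 1) x - net W' b' σa (n + 1) x‖
      ≤ ‖W' n‖ * ‖net W b σa n x - net W' b' σa n x‖ + ‖W n - W' n‖ * ‖net W b σa n x‖ +
          ‖b n - b' n‖ := norm_net_sub_net_succ_le (hσLip n) x
    _ ≤ R * ‖net W b σa n x - net W' b' σa n x‖ + Δ * growthBound R ‖x‖ n + Δ := by
        gcongr; exacts [hW' n hn, hWΔ n hn, hbΔ n hn]
    _ = R * ‖net W b σa n x - net W' b' σa n x‖ + (growthBound R ‖x‖ n + 1) * Δ := by ring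

end Network

theorem network_growth_and_lipschitz_general {E : ℕ → Type*}
    [∀ ℓ, NormedAddCommGroup (E ℓ)] [∀ ℓ, NormedSpace ℝ (E ℓ)]
    (Λ : ℕ)
    (W W' : ∀ ℓ : ℕ, E ℓ →L[ℝ] E (ℓ + 1)) (b b' : ∀ ℓ : ℕ, E (ℓ + 1))
    (σa : ∀ ℓ : ℕ, E (ℓ + 1) → E (ℓ + 1))
    (hσLip : ∀ ℓ, LipschitzWith 1 (σa ℓ)) (hσ0 : ∀ ℓ, σa ℓ 0 = 0)
    (R : ℝ) (hR : 1 < R)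
    (hW : ∀ ℓ < Λ, ‖W ℓ‖ ≤ R) (hb : ∀ ℓ < Λ, ‖b ℓ‖ ≤ R)
    (hW' : ∀ ℓ < Λ, ‖W' ℓ‖ ≤ R)
    (Δ : ℝ)
    (hΔ : Δ = (((Finset.range Λ).sup fun ℓ => max ‖W ℓ - W' ℓ‖₊ ‖b ℓ - b' ℓ‖₊ : NNReal) : ℝ))
    (x : E 0) :
    ‖net W b σa Λ x‖ ≤ R ^ Λ * ‖x‖ + (R / (R - 1)) * (R ^ Λ - 1) ∧
    ‖net W b σa Λ x - net W' b' σa Λ x‖ ≤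
      ((Λ : ℝ) * R ^ (Λ - 1) * (‖x‖ + R / (R - 1)) - (R ^ Λ - 1) / (R - 1) ^ 2) * Δ ∧
    (2 ≤ R → ‖net W b σa Λ x‖ ≤ R ^ Λ * (‖x‖ + 2)) ∧
    (2 ≤ R → ‖net W b σa Λ x - net W' b' σa Λ x‖ ≤
      (Λ : ℝ) * R ^ (Λ - 1) * (‖x‖ + 2) * Δ) := by
  have hlayer : ∀ ℓ < Λ, max ‖W ℓ - W' ℓ‖ ‖b ℓ - b' ℓ‖ ≤ Δ := fun ℓ hℓ => by
    rw [hΔ]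
    exact_mod_cast Finset.le_sup (f := fun ℓ => max ‖W ℓ - W' ℓ‖₊ ‖b ℓ - b' ℓ‖₊)
      (Finset.mem_range.mpr hℓ)
  have hWΔ : ∀ ℓ < Λ, ‖W ℓ - W' ℓ‖ ≤ Δ := fun ℓ hℓ => (le_max_left _ _).trans (hlayer ℓ hℓ)
  have hbΔ : ∀ ℓ < Λ, ‖b ℓ - b' ℓ‖ ≤ Δ := fun ℓ hℓ => (le_max_right _ _).trans (hlayer ℓ hℓ)
  have hgrowth := norm_net_le_growthBound hσLip hσ0 (by linarith) hR.ne' hW hb x Λ le_rfl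
  have hlip := norm_net_sub_net_le_lipschitzBound hσLip hσ0 (by linarith) hR.ne' hW hb hW'
    hWΔ hbΔ x Λ le_rfl
  have hΔ0 : 0 ≤ Δ := hΔ ▸ NNReal.coe_nonneg _
  exact ⟨hgrowth, hlip, fun hR2 => hgrowth.trans (growthBound_le_of_two_le hR2 _ _),
    fun hR2 => hlip.trans (mul_le_mul_of_nonneg_right (lipschitzBound_le_of_two_le hR2 _ _) hΔ0)⟩

/-- Growth and parameter-Lipschitz bounds for a feedforward network with 1-Lipschitz
activations vanishing at `0`, whose weight operator norms and bias norms are at most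
`R > 1`.  Here `Δ = ‖ω - ω'‖` is the maximum over layers of the operator norm of the
weight difference and the norm of the bias difference. -/
theorem network_growth_and_lipschitz {E : ℕ → Type*}
    [∀ ℓ, NormedAddCommGroup (E ℓ)] [∀ ℓ, NormedSpace ℝ (E ℓ)]
    (Λ : ℕ)
    (W W' : ∀ ℓ : ℕ, E ℓ →L[ℝ] E (ℓ + 1)) (b b' : ∀ ℓ : ℕ, E (ℓ + 1))
    (σa : ∀ ℓ : ℕ, E (ℓ + 1) → E (ℓ + 1))
    (hσLip : ∀ ℓ, LipschitzWith 1 (σa ℓ)) (hσ0 : ∀ ℓ, σa ℓ 0 = 0)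
    (R : ℝ) (hR : 1 < R)
    (hW : ∀ ℓ < Λ, ‖W ℓ‖ ≤ R) (hb : ∀ ℓ < Λ, ‖b ℓ‖ ≤ R)
    (hW' : ∀ ℓ < Λ, ‖W' ℓ‖ ≤ R) (hb' : ∀ ℓ < Λ, ‖b' ℓ‖ ≤ R)
    (Δ : ℝ)
    (hΔ : Δ = (((Finset.range Λ).sup fun ℓ => max ‖W ℓ - W' ℓ‖₊ ‖b ℓ - b' ℓ‖₊ : NNReal) : ℝ))
    (x : E 0) :
    ‖net W b σa Λ x‖ ≤ R ^ Λ * ‖x‖ + (R / (R - 1)) * (R ^ Λ - 1) ∧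
    ‖net W b σa Λ x - net W' b' σa Λ x‖ ≤
      ((Λ : ℝ) * R ^ (Λ - 1) * (‖x‖ + R / (R - 1)) - (R ^ Λ - 1) / (R - 1) ^ 2) * Δ ∧
    (2 ≤ R → ‖net W b σa Λ x‖ ≤ R ^ Λ * (‖x‖ + 2)) ∧
    (2 ≤ R → ‖net W b σa Λ x - net W' b' σa Λ x‖ ≤
      (Λ : ℝ) * R ^ (Λ - 1) * (‖x‖ + 2) * Δ) :=
  network_growth_and_lipschitz_general Λ W W' b b' σa hσLip hσ0 R hR hW hb hW' Δ hΔ x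
end
end

section
/- Let b ∈ ℝ^D have at least one positive entry, let A ∈ ℝ^{D×D} be symmetric positive semidefinite, let λ > 0 and Q' > 0, and let Ω = { ω ∈ ℝ^D : ω_i ≥ 0 for all i, Σ_i ω_i = Q' }. Define Ĵ_λ(ω) = (ω^T b) / sqrt( ω^T (A + λI) ω ). If ω̃ is a minimizer of ω^T (A + λI) ω over the convex set { ω ∈ ℝ^D : ω_i ≥ 0 for all i, ω^T b = 1 }, then ω̂ = (Q' / Σ_i ω̃_i)·ω̃ is a maximizer of Ĵ_λ over Ω. Moreover, in the multiple-kernel-learning setting where (H_{ij})_ℓ = k_ℓ(X_i,X_j) + k_ℓ(Y_i,Y_j) − k_ℓ(X_i,Y_j) − k_ℓ(X_j,Y_i) ∈ ℝ^D, b = (1/(n(n−1)))·Σ_{i≠j} H_{ij}, and A = (4/n³)·Σ_i (Σ_j H_{ij})(Σ_j H_{ij})^T − (4/n⁴)·(Σ_{ij} H_{ij})(Σ_{ij} H_{ij})^T, the MMD estimator and variance estimator for the combined kernel k_ω = Σ_ℓ ω_ℓ k_ℓ satisfy η̂_ω = ω^T b and σ̂_ω² = ω^T A ω (so in particular A is positive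 semidefinite). -/
open MeasureTheory Finset

noncomputable section

open Matrix

/-!
Since `Ĵ_λ(c • ω) = Ĵ_λ(ω)` for `c > 0`, maximizing `Ĵ_λ` over the simplex is the same as
maximizing it over the whole nonnegative orthant. A nonnegative `ω` with `ωᵀb ≤ 0` has
`Ĵ_λ(ω) ≤ 0`; otherwise rescale it to `ωᵀb = 1`, where `Ĵ_λ(ω) = (ωᵀ(A+λI)ω)^(-1/2)`, which is
largest when `ω` solves the quadratic program.

In the MKL setting `H_{ij}` is linear in the kernel, so `η̂_ω` and `σ̂²_ω` are the linear and
quadratic forms of `b` and `A`. Positive semidefiniteness of `A` is Cauchy–Schwarz,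
`(∑ᵢ gᵢ)² ≤ n ∑ᵢ gᵢ²`.
-/

section Criterion

variable {ι : Type*} [Fintype ι]

/-- The paper's `Ĵ_λ`, with `M = A + λI`. -/
def powerCriterion (M : Matrix ι ι ℝ) (b ω : ι → ℝ) : ℝ :=
  ω ⬝ᵥ b / Real.sqrt (ω ⬝ᵥ (M *ᵥ ω))

lemma smul_dotProduct_mulVec_smul (M : Matrix ι ι ℝ) (c : ℝ) (v : ι → ℝ) :
    (c • v) ⬝ᵥ (M *ᵥ (c • v)) = c ^ 2 * (v ⬝ᵥ (M *ᵥ v)) := by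
  rw [mulVec_smul, smul_dotProduct, dotProduct_smul, smul_eq_mul, smul_eq_mul]
  ring

lemma powerCriterion_smul (M : Matrix ι ι ℝ) (b v : ι → ℝ) {c : ℝ} (hc : 0 < c) :
    powerCriterion M b (c • v) = powerCriterion M b v := by
  rw [powerCriterion, powerCriterion, smul_dotProduct_mulVec_smul,
    Real.sqrt_mul (sq_nonneg c), Real.sqrt_sq hc.le, smul_dotProduct, smul_eq_mul,
    mul_div_mul_left _ _ hc.ne']

lemma powerCriterion_of_dotProduct_eq_one (M : Matrix ι ι ℝ) {b v : ι → ℝ} (hv : v ⬝ᵥ b = 1) :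
    powerCriterion M b v = (Real.sqrt (v ⬝ᵥ (M *ᵥ v)))⁻¹ := by
  rw [powerCriterion, hv, one_div]

lemma ne_zero_of_dotProduct_eq_one {b v : ι → ℝ} (hv : v ⬝ᵥ b = 1) : v ≠ 0 := by
  rintro rfl
  simp at hv

lemma powerCriterion_le_of_isMinOn {M : Matrix ι ι ℝ} (hM : M.PosDef) {b ω₀ ω : ι → ℝ}
    (hmin : IsMinOn (fun v => v ⬝ᵥ (M *ᵥ v)) {v | (∀ i, 0 ≤ v i) ∧ v ⬝ᵥ b = 1} ω₀)
    (hω₀ : ω₀ ⬝ᵥ b = 1) (hω : ∀ i, 0 ≤ ω i) :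
    powerCriterion M b ω ≤ powerCriterion M b ω₀ := by
  have hq₀ : 0 < ω₀ ⬝ᵥ (M *ᵥ ω₀) := by
    simpa using hM.dotProduct_mulVec_pos (ne_zero_of_dotProduct_eq_one hω₀)
  rw [powerCriterion_of_dotProduct_eq_one M hω₀]
  rcases le_or_gt (ω ⬝ᵥ b) 0 with hb | hb
  · calc powerCriterion M b ω ≤ 0 := div_nonpos_of_nonpos_of_nonneg hb (Real.sqrt_nonneg _)
      _ ≤ _ := by positivity
  · set ω' := (ω ⬝ᵥ b)⁻¹ • ω
    have hω'b : ω' ⬝ᵥ b = 1 := by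
      rw [smul_dotProduct, smul_eq_mul, inv_mul_cancel₀ hb.ne']
    have hω' : ∀ i, 0 ≤ ω' i := fun i => mul_nonneg (inv_nonneg.2 hb.le) (hω i)
    rw [← powerCriterion_smul M b ω (inv_pos.2 hb), powerCriterion_of_dotProduct_eq_one M hω'b]
    gcongr
    exact isMinOn_iff.1 hmin ω' ⟨hω', hω'b⟩

end Criterion

section MKL

variable {𝓧 ι : Type*} [Fintype ι] {n : ℕ}

lemma Hmat_sum_mul (k : ι → 𝓧 → 𝓧 → ℝ) (ω : ι → ℝ) (sp : (Fin n → 𝓧) × (Fin n → 𝓧))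
    (i j : Fin n) :
    Hmat (fun a b => ∑ ℓ, ω ℓ * k ℓ a b) sp i j = ω ⬝ᵥ fun ℓ => Hmat (k ℓ) sp i j := by
  simp only [Hmat, dotProduct, mul_add, mul_sub, Finset.sum_add_distrib, Finset.sum_sub_distrib]

lemma etaHat_eq_dotProduct {k : 𝓧 → 𝓧 → ℝ} {sp : (Fin n → 𝓧) × (Fin n → 𝓧)} {ω : ι → ℝ}
    {H : Fin n → Fin n → ι → ℝ} (hH : ∀ i j, Hmat k sp i j = ω ⬝ᵥ H i j) :
    etaHat k sp = ω ⬝ᵥ ((1 / ((n : ℝ) * ((n : ℝ) - 1))) • ∑ i, ∑ j ∈ univ.erase i, H i j) := by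
  simp only [etaHat, hH, dotProduct_smul, dotProduct_sum, smul_eq_mul]

def varianceMatrix (r : Fin n → ι → ℝ) : Matrix ι ι ℝ :=
  (4 / (n : ℝ) ^ 3) • ∑ i, vecMulVec (r i) (r i)
    - (4 / (n : ℝ) ^ 4) • vecMulVec (∑ i, r i) (∑ i, r i)

lemma dotProduct_vecMulVec_self_mulVec (u ω : ι → ℝ) :
    ω ⬝ᵥ (vecMulVec u u *ᵥ ω) = (ω ⬝ᵥ u) ^ 2 := by
  rw [vecMulVec_mulVec, op_smul_eq_smul, dotProduct_smul, smul_eq_mul, dotProduct_comm u, sq]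

lemma dotProduct_varianceMatrix_mulVec (r : Fin n → ι → ℝ) (ω : ι → ℝ) :
    ω ⬝ᵥ (varianceMatrix r *ᵥ ω) =
      4 / (n : ℝ) ^ 3 * ∑ i, (ω ⬝ᵥ r i) ^ 2 - 4 / (n : ℝ) ^ 4 * (∑ i, ω ⬝ᵥ r i) ^ 2 := by
  simp only [varianceMatrix, sub_mulVec, smul_mulVec, sum_mulVec, dotProduct_sub,
    dotProduct_smul, dotProduct_sum, dotProduct_vecMulVec_self_mulVec, smul_eq_mul]

lemma sigmaHatSq_eq_dotProduct_mulVec {k : 𝓧 → 𝓧 → ℝ} {sp : (Fin n → 𝓧) × (Fin n → 𝓧)}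
    {ω : ι → ℝ} {H : Fin n → Fin n → ι → ℝ} (hH : ∀ i j, Hmat k sp i j = ω ⬝ᵥ H i j) :
    sigmaHatSq k sp = ω ⬝ᵥ (varianceMatrix (fun i => ∑ j, H i j) *ᵥ ω) := by
  simp only [sigmaHatSq, hH, dotProduct_varianceMatrix_mulVec, dotProduct_sum]
  ring

lemma posSemidef_varianceMatrix (r : Fin n → ι → ℝ) : (varianceMatrix r).PosSemidef := by
  have hvv : ∀ u : ι → ℝ, (vecMulVec u u).PosSemidef := fun u => by
    simpa using posSemidef_vecMulVec_self_star u
  have hsum := posSemidef_sum univ fun i _ => hvv (r i)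
  refine posSemidef_iff_dotProduct_mulVec.2
    ⟨(hsum.smul (by positivity)).isHermitian.sub ((hvv _).smul (by positivity)).isHermitian,
      fun ω => ?_⟩
  rw [star_trivial, dotProduct_varianceMatrix_mulVec]
  have hcs := sq_sum_le_card_mul_sum_sq (s := univ) (f := fun i => ω ⬝ᵥ r i)
  rw [card_univ, Fintype.card_fin] at hcs
  rcases n.eq_zero_or_pos with rfl | hn
  · simp
  · have hcs' : 4 / (n : ℝ) ^ 4 * (∑ i, ω ⬝ᵥ r i) ^ 2 ≤ 4 / (n : ℝ) ^ 3 * ∑ i, (ω ⬝ᵥ r i) ^ 2 :=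
      calc 4 / (n : ℝ) ^ 4 * (∑ i, ω ⬝ᵥ r i) ^ 2
          ≤ 4 / (n : ℝ) ^ 4 * (n * ∑ i, (ω ⬝ᵥ r i) ^ 2) := by gcongr
        _ = 4 / (n : ℝ) ^ 3 * ∑ i, (ω ⬝ᵥ r i) ^ 2 := by field_simp
    linarith

end MKL

theorem mkl_quadratic_program_general {𝓧 : Type*} (D n : ℕ)
    (k : Fin D → 𝓧 → 𝓧 → ℝ)
    (x y : Fin n → 𝓧)
    (Hvec : Fin n → Fin n → Fin D → ℝ)
    (hHvec : ∀ i j ℓ, Hvec i j ℓ =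
      k ℓ (x i) (x j) + k ℓ (y i) (y j) - k ℓ (x i) (y j) - k ℓ (x j) (y i))
    (bb : Fin D → ℝ)
    (hbb : bb = (1 / ((n : ℝ) * ((n : ℝ) - 1))) •
      ∑ i : Fin n, ∑ j ∈ Finset.univ.erase i, Hvec i j)
    (A : Matrix (Fin D) (Fin D) ℝ)
    (hA : A = (4 / (n : ℝ) ^ 3) •
        ∑ i : Fin n, vecMulVec (∑ j : Fin n, Hvec i j) (∑ j : Fin n, Hvec i j)
      - (4 / (n : ℝ) ^ 4) •
        vecMulVec (∑ i : Fin n, ∑ j : Fin n, Hvec i j)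
          (∑ i : Fin n, ∑ j : Fin n, Hvec i j)) :
    -- generic statement: rescaling the QP solution maximizes `Ĵ_λ` over the simplex
    (∀ (A' : Matrix (Fin D) (Fin D) ℝ) (b' : Fin D → ℝ) (lam Q' : ℝ)
        (tilde : Fin D → ℝ),
      A'.PosSemidef → (∃ i, 0 < b' i) → 0 < lam → 0 < Q' →
      (∀ i, 0 ≤ tilde i) → tilde ⬝ᵥ b' = 1 →
      (∀ ω : Fin D → ℝ, (∀ i, 0 ≤ ω i) → ω ⬝ᵥ b' = 1 →
        tilde ⬝ᵥ ((A' + lam • 1) *ᵥ tilde) ≤ ω ⬝ᵥ ((A' + lam • 1) *ᵥ ω)) →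
      ((∀ i, 0 ≤ ((Q' / ∑ i', tilde i') • tilde) i) ∧
       (∑ i, ((Q' / ∑ i', tilde i') • tilde) i) = Q' ∧
       ∀ ω : Fin D → ℝ, (∀ i, 0 ≤ ω i) → (∑ i, ω i) = Q' →
         (ω ⬝ᵥ b') / Real.sqrt (ω ⬝ᵥ ((A' + lam • 1) *ᵥ ω)) ≤
           (((Q' / ∑ i', tilde i') • tilde) ⬝ᵥ b') /
             Real.sqrt (((Q' / ∑ i', tilde i') • tilde) ⬝ᵥ
               ((A' + lam • 1) *ᵥ ((Q' / ∑ i', tilde i') • tilde))))) ∧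
    -- MKL identities for the concrete `b` and `A`
    A.PosSemidef ∧
    (∀ ω : Fin D → ℝ,
      etaHat (fun a b => ∑ ℓ : Fin D, ω ℓ * k ℓ a b) (x, y) = ω ⬝ᵥ bb) ∧
    (∀ ω : Fin D → ℝ,
      sigmaHatSq (fun a b => ∑ ℓ : Fin D, ω ℓ * k ℓ a b) (x, y) = ω ⬝ᵥ (A *ᵥ ω)) := by
  obtain rfl : Hvec = fun i j ℓ => Hmat (k ℓ) (x, y) i j := by
    ext i j ℓ
    exact hHvec i j ℓ
  subst hbb hA
  refine ⟨fun A' b' lam Q' ω₀ hA' _ hlam hQ hω₀ hω₀b hmin => ?_, posSemidef_varianceMatrix _,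
    fun ω => etaHat_eq_dotProduct (Hmat_sum_mul k ω _),
    fun ω => sigmaHatSq_eq_dotProduct_mulVec (Hmat_sum_mul k ω _)⟩
  have hsum : 0 < ∑ i, ω₀ i := by
    obtain ⟨i, hi⟩ := Function.ne_iff.1 (ne_zero_of_dotProduct_eq_one hω₀b)
    exact Finset.sum_pos' (fun i _ => hω₀ i) ⟨i, mem_univ i, (hω₀ i).lt_of_ne' hi⟩
  have hc : 0 < Q' / ∑ i, ω₀ i := div_pos hQ hsum
  refine ⟨fun i => mul_nonneg hc.le (hω₀ i), ?_, fun ω hω _ => ?_⟩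
  · simp only [Pi.smul_apply, smul_eq_mul, ← Finset.mul_sum, div_mul_cancel₀ Q' hsum.ne']
  · have hM : (A' + lam • 1).PosDef := PosDef.posSemidef_add hA' (PosDef.one.smul hlam)
    show powerCriterion _ b' ω ≤ powerCriterion _ b' _
    rw [powerCriterion_smul _ b' ω₀ hc]
    exact powerCriterion_le_of_isMinOn hM (isMinOn_iff.2 fun v hv => hmin v hv.1 hv.2) hω₀b hω

/-- Closed-form kernel selection for multiple kernel learning: the maximizer of the
regularized criterion `Ĵ_λ(ω) = (ωᵀb)/sqrt(ωᵀ(A+λI)ω)` over the simplex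
`{ω ≥ 0, ∑ᵢ ωᵢ = Q'}` is obtained by rescaling the solution of the convex quadratic
program `min ωᵀ(A+λI)ω` over `{ω ≥ 0, ωᵀb = 1}`; moreover, in the MKL setting the
MMD estimator and variance estimator are `η̂_ω = ωᵀb` and `σ̂_ω² = ωᵀAω`
(so in particular `A` is positive semidefinite). -/
theorem mkl_quadratic_program {𝓧 : Type*} (D n : ℕ)
    (k : Fin D → 𝓧 → 𝓧 → ℝ) (hsymm : ∀ ℓ x y, k ℓ x y = k ℓ y x)
    (x y : Fin n → 𝓧)
    (Hvec : Fin n → Fin n → Fin D → ℝ)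
    (hHvec : ∀ i j ℓ, Hvec i j ℓ =
      k ℓ (x i) (x j) + k ℓ (y i) (y j) - k ℓ (x i) (y j) - k ℓ (x j) (y i))
    (bb : Fin D → ℝ)
    (hbb : bb = (1 / ((n : ℝ) * ((n : ℝ) - 1))) •
      ∑ i : Fin n, ∑ j ∈ Finset.univ.erase i, Hvec i j)
    (A : Matrix (Fin D) (Fin D) ℝ)
    (hA : A = (4 / (n : ℝ) ^ 3) •
        ∑ i : Fin n, vecMulVec (∑ j : Fin n, Hvec i j) (∑ j : Fin n, Hvec i j)
      - (4 / (n : ℝ) ^ 4) •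
        vecMulVec (∑ i : Fin n, ∑ j : Fin n, Hvec i j)
          (∑ i : Fin n, ∑ j : Fin n, Hvec i j)) :
    -- generic statement: rescaling the QP solution maximizes `Ĵ_λ` over the simplex
    (∀ (A' : Matrix (Fin D) (Fin D) ℝ) (b' : Fin D → ℝ) (lam Q' : ℝ)
        (tilde : Fin D → ℝ),
      A'.PosSemidef → (∃ i, 0 < b' i) → 0 < lam → 0 < Q' →
      (∀ i, 0 ≤ tilde i) → tilde ⬝ᵥ b' = 1 →
      (∀ ω : Fin D → ℝ, (∀ i, 0 ≤ ω i) → ω ⬝ᵥ b' = 1 →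
        tilde ⬝ᵥ ((A' + lam • 1) *ᵥ tilde) ≤ ω ⬝ᵥ ((A' + lam • 1) *ᵥ ω)) →
      ((∀ i, 0 ≤ ((Q' / ∑ i', tilde i') • tilde) i) ∧
       (∑ i, ((Q' / ∑ i', tilde i') • tilde) i) = Q' ∧
       ∀ ω : Fin D → ℝ, (∀ i, 0 ≤ ω i) → (∑ i, ω i) = Q' →
         (ω ⬝ᵥ b') / Real.sqrt (ω ⬝ᵥ ((A' + lam • 1) *ᵥ ω)) ≤
           (((Q' / ∑ i', tilde i') • tilde) ⬝ᵥ b') /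
             Real.sqrt (((Q' / ∑ i', tilde i') • tilde) ⬝ᵥ
               ((A' + lam • 1) *ᵥ ((Q' / ∑ i', tilde i') • tilde))))) ∧
    -- MKL identities for the concrete `b` and `A`
    A.PosSemidef ∧
    (∀ ω : Fin D → ℝ,
      etaHat (fun a b => ∑ ℓ : Fin D, ω ℓ * k ℓ a b) (x, y) = ω ⬝ᵥ bb) ∧
    (∀ ω : Fin D → ℝ,
      sigmaHatSq (fun a b => ∑ ℓ : Fin D, ω ℓ * k ℓ a b) (x, y) = ω ⬝ᵥ (A *ᵥ ω)) :=
  mkl_quadratic_program_general D n k x y Hvec hHvec bb hbb A hA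
end
end
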